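/- arXiv:2512.15077 — 6 statements merged into one kernel-verified Lean document; each statement's English description precedes it below -/
import Mathlib

section
/- There exists an absolute constant C > 0 such that for every n ≥ 1 and every n × n complex matrix A all of whose entries have absolute value at most 1, there exists a vector x ∈ {-1, 0, 1}^n with at least n/4 non-zero coordinates such that ‖Ax‖_∞ ≤ C √n. -/
/-!
Spencer's entropy argument, with counting in place of entropy. Split `A` into the `2n` real rows
of its real and imaginary parts, and give each sign vector `ε ∈ {±1}ⁿ` the signature obtained by
rounding these rows of `Aε` to the nearest multiple of `Δ = 64√n`. Two sign vectors `ε, ε'` with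
the same signature yield `x = (ε - ε')/2 ∈ {-1, 0, 1}ⁿ` whose image `Ax` has entries with real
and imaginary parts of size at most `Δ/2`, and the support of `x` has the size of the Hamming
distance of `ε` and `ε'`.

Since `∑_ε ⟨r, ε⟩² = 2ⁿ‖r‖²` and `|round z| ≤ 4z²`, signatures are small on average, so at least
half of the sign vectors have a signature of (zigzag) weight at most `n/128`. A Markov-type count
against a generating function bounds the number of such signatures by `1.07ⁿ`, and in the same
way a Hamming ball of radius `n/4` has at most `1.76ⁿ` points. As `2ⁿ/2` exceeds the product,
some signature is shared by two sign vectors at Hamming distance at least `n/4`.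
For `n ≤ 4096` the all-ones vector already works.
-/

open Finset Matrix

lemma card_mul_pow_le_sum_pow {α : Type*} {s : Finset α} {g : α → ℕ} {N : ℕ} {v : ℝ}
    (hv0 : 0 ≤ v) (hv1 : v ≤ 1) (hg : ∀ a ∈ s, g a ≤ N) :
    #s * v ^ N ≤ ∑ a ∈ s, v ^ g a := by
  rw [← nsmul_eq_mul, ← sum_const]
  exact sum_le_sum fun a ha => pow_le_pow_of_le_one hv0 hv1 (hg a ha)

theorem exists_mem_fiber_not_mem_of_card_mul_lt {α β : Type*} [DecidableEq β] {s : Finset α}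
    {t : Finset β} {φ : α → β} (hφ : ∀ a ∈ s, φ a ∈ t) (ball : α → Finset α) {B : ℝ}
    (hB0 : 0 ≤ B) (hB : ∀ a, (#(ball a) : ℝ) ≤ B) (h : #t * B < #s) :
    ∃ a ∈ s, ∃ a' ∈ s, φ a' = φ a ∧ a' ∉ ball a := by
  obtain ⟨y, -, hy⟩ :=
    exists_lt_card_fiber_of_nsmul_lt_card_of_maps_to (b := B) hφ (by rwa [nsmul_eq_mul])
  obtain ⟨a, ha⟩ : {x ∈ s | φ x = y}.Nonempty := card_pos.1 (by exact_mod_cast hB0.trans_lt hy)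
  obtain ⟨a', ha', ha'_ball⟩ := not_subset.1 fun hsub =>
    (card_le_card hsub).not_gt (by exact_mod_cast (hB a).trans_lt hy)
  rw [mem_filter] at ha ha'
  exact ⟨a, ha.1, a', ha'.1, ha'.2.trans ha.2.symm, ha'_ball⟩

lemma abs_round_le_four_mul_sq (z : ℝ) : |(round z : ℝ)| ≤ 4 * z ^ 2 := by
  rcases lt_or_ge |z| (1 / 2) with hz | hz
  · have : round z = 0 := round_eq_zero_iff.2 ⟨by linarith [abs_lt.1 hz], (abs_lt.1 hz).2⟩
    rw [this, Int.cast_zero, abs_zero]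
    positivity
  · have h := abs_sub_round z
    have : |(round z : ℝ)| ≤ |z| + 1 / 2 := by
      have := abs_sub_abs_le_abs_sub (round z : ℝ) z
      rw [abs_sub_comm] at h
      linarith
    nlinarith [sq_abs z]

lemma abs_sub_le_of_round_div_eq {a b Δ : ℝ} (hΔ : 0 < Δ) (h : round (a / Δ) = round (b / Δ)) :
    |a - b| ≤ Δ := by
  have ha := abs_sub_round (a / Δ)
  have hb := abs_sub_round (b / Δ)
  rw [h] at ha
  have : |a / Δ - b / Δ| ≤ 1 := by
    calc |a / Δ - b / Δ| ≤ |a / Δ - round (b / Δ)| + |round (b / Δ) - b / Δ| := abs_sub_le _ _ _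
      _ ≤ 1 := by rw [abs_sub_comm (round _ : ℝ)]; linarith
  rwa [← sub_div, abs_div, abs_of_pos hΔ, div_le_one hΔ] at this

lemma intEquivNat_le_two_mul_natAbs (z : ℤ) : Equiv.intEquivNat z ≤ 2 * z.natAbs := by
  rcases z with n | n
  · show 2 * n ≤ 2 * (Int.ofNat n).natAbs
    simp
  · show 2 * n + 1 ≤ 2 * (Int.negSucc n).natAbs
    simp [Int.natAbs_negSucc]

lemma intEquivNat_round_le_eight_mul_sq (z : ℝ) :
    (Equiv.intEquivNat (round z) : ℝ) ≤ 8 * z ^ 2 := by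
  have h := intEquivNat_le_two_mul_natAbs (round z)
  have h' : ((Equiv.intEquivNat (round z) : ℕ) : ℝ) ≤ 2 * |(round z : ℝ)| := by
    rw [← Int.cast_abs, ← Nat.cast_natAbs]; exact_mod_cast h
  linarith [abs_round_le_four_mul_sq z]

section ZigzagWeight

variable {κ : Type*} [Fintype κ]

/-- `Equiv.intEquivNat` enumerates `ℤ` as `0, -1, 1, -2, 2, …`. -/
def zigzagWeight (s : κ → ℤ) : ℕ := ∑ k, Equiv.intEquivNat (s k)

lemma sum_pow_zigzagWeight_le (T : Finset (κ → ℤ)) {q : ℝ} (hq0 : 0 ≤ q) (hq1 : q < 1) :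
    ∑ s ∈ T, q ^ zigzagWeight s ≤ (1 - q)⁻¹ ^ Fintype.card κ := by
  classical
  set U : Finset ℤ := T.biUnion fun s => univ.image s
  have hTU : T ⊆ Fintype.piFinset fun _ : κ => U := fun s hs =>
    Fintype.mem_piFinset.2 fun k => mem_biUnion.2 ⟨s, hs, mem_image_of_mem s (mem_univ k)⟩
  have hU : ∑ z ∈ U, q ^ Equiv.intEquivNat z ≤ (1 - q)⁻¹ := by
    have hsummable : Summable fun z : ℤ => q ^ Equiv.intEquivNat z :=
      (Equiv.intEquivNat.summable_iff (f := fun m : ℕ => q ^ m)).2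
        (summable_geometric_of_lt_one hq0 hq1)
    calc ∑ z ∈ U, q ^ Equiv.intEquivNat z ≤ ∑' z : ℤ, q ^ Equiv.intEquivNat z :=
          hsummable.sum_le_tsum U fun _ _ => by positivity
      _ = (1 - q)⁻¹ := by
          rw [Equiv.tsum_eq Equiv.intEquivNat (fun m => q ^ m), tsum_geometric_of_lt_one hq0 hq1]
  calc ∑ s ∈ T, q ^ zigzagWeight s
      ≤ ∑ s ∈ Fintype.piFinset (fun _ : κ => U), ∏ k, q ^ Equiv.intEquivNat (s k) := by
        simp only [zigzagWeight, prod_pow_eq_pow_sum]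
        exact sum_le_sum_of_subset_of_nonneg hTU fun _ _ _ => by positivity
    _ = ∏ _k : κ, ∑ z ∈ U, q ^ Equiv.intEquivNat z :=
        (prod_univ_sum (fun _ : κ => U) fun _ z => q ^ Equiv.intEquivNat z).symm
    _ ≤ (1 - q)⁻¹ ^ Fintype.card κ := by
        rw [prod_const, card_univ]
        exact pow_le_pow_left₀ (by positivity) hU _

lemma card_mul_pow_le_of_zigzagWeight_le {T : Finset (κ → ℤ)} {k N : ℕ}
    (hT : ∀ s ∈ T, k * zigzagWeight s ≤ N) (hk : k ≠ 0) {v : ℝ} (hv0 : 0 ≤ v) (hv1 : v < 1) :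
    #T * v ^ N ≤ (1 - v ^ k)⁻¹ ^ Fintype.card κ :=
  calc #T * v ^ N ≤ ∑ s ∈ T, v ^ (k * zigzagWeight s) := card_mul_pow_le_sum_pow hv0 hv1.le hT
    _ = ∑ s ∈ T, (v ^ k) ^ zigzagWeight s := by simp_rw [pow_mul]
    _ ≤ (1 - v ^ k)⁻¹ ^ Fintype.card κ :=
        sum_pow_zigzagWeight_le T (by positivity) (pow_lt_one₀ hv0 hv1 hk)

end ZigzagWeight

def signVec {ι : Type*} (b : ι → Bool) : ι → ℝ := fun j => if b j then 1 else -1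

lemma signVec_mul_self {ι : Type*} (b : ι → Bool) (j : ι) : signVec b j * signVec b j = 1 := by
  unfold signVec; split <;> norm_num

lemma signVec_sub_signVec_ne_zero_iff {ι : Type*} (b b' : ι → Bool) (j : ι) :
    signVec b' j - signVec b j ≠ 0 ↔ b' j ≠ b j := by
  unfold signVec; cases b j <;> cases b' j <;> norm_num

lemma half_signVec_sub_signVec_mem {ι : Type*} (b b' : ι → Bool) (j : ι) :
    (signVec b' j - signVec b j) / 2 = 1 ∨ (signVec b' j - signVec b j) / 2 = 0 ∨
      (signVec b' j - signVec b j) / 2 = -1 := by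
  unfold signVec; cases b j <;> cases b' j <;> norm_num

section SignVectors

variable {ι : Type*} [Fintype ι] [DecidableEq ι]

lemma sum_signVec_mul_signVec_of_ne {j l : ι} (hjl : j ≠ l) :
    ∑ b : ι → Bool, signVec b j * signVec b l = 0 := by
  set toggle : (ι → Bool) → ι → Bool := fun b => Function.update b j (!b j)
  have htoggle : Function.Involutive toggle := fun b => by simp [toggle]
  have hneg : ∀ b, signVec (toggle b) j * signVec (toggle b) l = -(signVec b j * signVec b l) := by
    intro b
    simp only [toggle, signVec, Function.update_self, Function.update_of_ne hjl.symm]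
    cases b j <;> cases b l <;> norm_num
  have := Equiv.sum_comp htoggle.toPerm (fun b => signVec b j * signVec b l)
  simp only [Function.Involutive.coe_toPerm, hneg, sum_neg_distrib] at this
  linarith

lemma sum_dotProduct_signVec_sq (r : ι → ℝ) :
    ∑ b : ι → Bool, (r ⬝ᵥ signVec b) ^ 2 = 2 ^ Fintype.card ι * ∑ j, r j ^ 2 := by
  have hdiag : ∀ j l, ∑ b : ι → Bool, signVec b j * signVec b l =
      if j = l then 2 ^ Fintype.card ι else 0 := by
    intro j l
    split_ifs with hjl
    · simp [hjl, signVec_mul_self]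
    · exact sum_signVec_mul_signVec_of_ne hjl
  calc ∑ b : ι → Bool, (r ⬝ᵥ signVec b) ^ 2
      = ∑ j, ∑ l, r j * r l * ∑ b : ι → Bool, signVec b j * signVec b l := by
        simp_rw [dotProduct, sq, sum_mul_sum]
        simp_rw [mul_sum]
        rw [sum_comm]
        refine sum_congr rfl fun j _ => ?_
        rw [sum_comm]
        exact sum_congr rfl fun l _ => sum_congr rfl fun b _ => by ring
    _ = 2 ^ Fintype.card ι * ∑ j, r j ^ 2 := by
        simp [hdiag, mul_sum, sq, mul_comm]

lemma sum_dotProduct_signVec_sq_le {r : ι → ℝ} (hr : ∀ j, |r j| ≤ 1) :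
    ∑ b : ι → Bool, (r ⬝ᵥ signVec b) ^ 2 ≤ 2 ^ Fintype.card ι * Fintype.card ι := by
  rw [sum_dotProduct_signVec_sq]
  gcongr
  calc ∑ j, r j ^ 2 ≤ ∑ _j : ι, (1 : ℝ) :=
        sum_le_sum fun j _ => (sq_le_one_iff_abs_le_one _).2 (hr j)
    _ = Fintype.card ι := by simp

lemma sum_pow_hammingDist {R : Type*} [CommSemiring R] (a : ι → Bool) (x : R) :
    ∑ b : ι → Bool, x ^ hammingDist b a = (1 + x) ^ Fintype.card ι := by
  have hprod : ∀ b : ι → Bool, x ^ hammingDist b a = ∏ j, if b j ≠ a j then x else 1 := by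
    intro b
    rw [prod_ite, prod_const_one, mul_one, prod_const, hammingDist]
  simp_rw [hprod]
  rw [← Fintype.prod_sum (fun j (c : Bool) => if c ≠ a j then x else 1)]
  calc ∏ j, ∑ c : Bool, (if c ≠ a j then x else 1) = ∏ _j : ι, (1 + x) :=
        prod_congr rfl fun j _ => by cases a j <;> simp [add_comm]
    _ = (1 + x) ^ Fintype.card ι := by simp

lemma card_filter_mul_hammingDist_le_mul_pow_le (a : ι → Bool) (k : ℕ) {v : ℝ} (hv0 : 0 ≤ v)
    (hv1 : v ≤ 1) :
    #{b | k * hammingDist b a ≤ Fintype.card ι} * v ^ Fintype.card ι ≤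
      (1 + v ^ k) ^ Fintype.card ι :=
  calc _ ≤ ∑ b ∈ {b | k * hammingDist b a ≤ Fintype.card ι}, v ^ (k * hammingDist b a) :=
        card_mul_pow_le_sum_pow hv0 hv1 fun b hb => (mem_filter.1 hb).2
    _ ≤ ∑ b, (v ^ k) ^ hammingDist b a := by
        simp_rw [pow_mul]
        exact sum_le_sum_of_subset_of_nonneg (subset_univ _) fun _ _ _ => by positivity
    _ = (1 + v ^ k) ^ Fintype.card ι := sum_pow_hammingDist a _

end SignVectors

section Signature

variable {ι κ : Type*} [Fintype ι] [Fintype κ]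

noncomputable def signature (M : Matrix κ ι ℝ) (Δ : ℝ) (b : ι → Bool) : κ → ℤ :=
  fun k => round ((M *ᵥ signVec b) k / Δ)

variable [DecidableEq ι] {M : Matrix κ ι ℝ}

lemma sum_zigzagWeight_signature_le (hM : ∀ k j, |M k j| ≤ 1) (Δ : ℝ) :
    ∑ b : ι → Bool, (zigzagWeight (signature M Δ b) : ℝ) ≤
      8 * Fintype.card κ * (2 ^ Fintype.card ι * Fintype.card ι) / Δ ^ 2 :=
  calc ∑ b : ι → Bool, (zigzagWeight (signature M Δ b) : ℝ)
      ≤ ∑ b : ι → Bool, ∑ k, 8 * ((M *ᵥ signVec b) k / Δ) ^ 2 := by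
        simp only [zigzagWeight, signature, Nat.cast_sum]
        exact sum_le_sum fun b _ => sum_le_sum fun k _ => intEquivNat_round_le_eight_mul_sq _
    _ = 8 / Δ ^ 2 * ∑ k, ∑ b : ι → Bool, (M *ᵥ signVec b) k ^ 2 := by
        rw [sum_comm, mul_sum]
        simp only [mul_sum, div_pow]
        exact sum_congr rfl fun _ _ => sum_congr rfl fun _ _ => by ring
    _ ≤ 8 / Δ ^ 2 * ∑ _k : κ, (2 ^ Fintype.card ι * Fintype.card ι : ℝ) := by
        gcongr with k
        exact sum_dotProduct_signVec_sq_le (hM k)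
    _ = 8 * Fintype.card κ * (2 ^ Fintype.card ι * Fintype.card ι) / Δ ^ 2 := by
        simp only [sum_const, card_univ, nsmul_eq_mul]
        ring

lemma two_pow_div_two_le_card_filter_zigzagWeight (hM : ∀ k j, |M k j| ≤ 1)
    (hκ : Fintype.card κ ≤ 2 * Fintype.card ι) (hι : 0 < Fintype.card ι) :
    (2 : ℝ) ^ Fintype.card ι / 2 ≤
      #{b | 128 * zigzagWeight (signature M (64 * √(Fintype.card ι)) b) ≤ Fintype.card ι} := by
  set n := Fintype.card ι
  set w := fun b => zigzagWeight (signature M (64 * √n) b)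
  have hn : (0 : ℝ) < n := by exact_mod_cast hι
  have hbad : (#{b | ¬ 128 * w b ≤ n} : ℝ) * n ≤ 2 ^ n / 2 * n :=
    calc (#{b | ¬ 128 * w b ≤ n} : ℝ) * n ≤ ∑ b ∈ {b | ¬ 128 * w b ≤ n}, (128 * w b : ℝ) := by
          rw [← nsmul_eq_mul, ← sum_const]
          exact sum_le_sum fun b hb => by exact_mod_cast (not_le.1 (mem_filter.1 hb).2).le
      _ ≤ 128 * ∑ b, (w b : ℝ) := by
          rw [← mul_sum]
          gcongr
          exact subset_univ _
      _ ≤ 128 * (8 * (2 * n) * (2 ^ n * n) / (64 * √n) ^ 2) := by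
          gcongr
          exact (sum_zigzagWeight_signature_le hM _).trans (by gcongr; exact_mod_cast hκ)
      _ = 2 ^ n / 2 * n := by
          rw [mul_pow, Real.sq_sqrt hn.le]
          field_simp
          ring
  have hsplit := card_filter_add_card_filter_not (s := (univ : Finset (ι → Bool)))
    fun b => 128 * w b ≤ n
  rw [card_univ, Fintype.card_fun, Fintype.card_bool] at hsplit
  have : (#{b | 128 * w b ≤ n} : ℝ) + #{b | ¬ 128 * w b ≤ n} = 2 ^ n := by exact_mod_cast hsplit
  linarith [le_of_mul_le_mul_right hbad hn]

end Signature

lemma signature_bound_mul_ball_bound_lt {n : ℕ} (hn : 15 ≤ n) :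
    (1 - (15 / 16 : ℝ) ^ 128)⁻¹ ^ (2 * n) / (15 / 16) ^ n *
      ((1 + (3 / 4 : ℝ) ^ 4) ^ n / (3 / 4) ^ n) < 2 ^ n / 2 := by
  have hc : (1 - (15 / 16 : ℝ) ^ 128)⁻¹ ^ 2 / (15 / 16) * ((1 + (3 / 4 : ℝ) ^ 4) / (3 / 4)) <
      15 / 8 := by
    norm_num
  have hbern : 2 ≤ (16 / 15 : ℝ) ^ n := by
    have := one_add_mul_le_pow (by norm_num : (-2 : ℝ) ≤ 1 / 15) n
    have h15 : (15 : ℝ) ≤ n := by exact_mod_cast hn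
    norm_num at this
    linarith
  rw [pow_mul, ← div_pow, ← div_pow, ← mul_pow, lt_div_iff₀ two_pos]
  calc _ < (15 / 8 : ℝ) ^ n * 2 := by gcongr
    _ ≤ (15 / 8) ^ n * (16 / 15) ^ n := by gcongr
    _ = 2 ^ n := by rw [← mul_pow]; norm_num

section PartialColouring

variable {ι κ : Type*} [Fintype ι] [DecidableEq ι] [Fintype κ] {M : Matrix κ ι ℝ}

theorem exists_signVec_far_of_mulVec_sub_le (hM : ∀ k j, |M k j| ≤ 1)
    (hκ : Fintype.card κ ≤ 2 * Fintype.card ι) (hι : 15 ≤ Fintype.card ι) :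
    ∃ b b' : ι → Bool, Fintype.card ι ≤ 4 * hammingDist b' b ∧
      ∀ k, |(M *ᵥ (signVec b' - signVec b)) k| ≤ 64 * √(Fintype.card ι) := by
  set n := Fintype.card ι
  set Δ := 64 * √n
  have hΔ : 0 < Δ := by
    have : (0 : ℝ) < n := by exact_mod_cast (by omega : 0 < n)
    positivity
  set good : Finset (ι → Bool) := {b | 128 * zigzagWeight (signature M Δ b) ≤ n}
  have hgood : (2 : ℝ) ^ n / 2 ≤ #good :=
    two_pow_div_two_le_card_filter_zigzagWeight hM hκ (by omega)
  have hsig : (#(good.image (signature M Δ)) : ℝ) ≤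
      (1 - (15 / 16 : ℝ) ^ 128)⁻¹ ^ (2 * n) / (15 / 16) ^ n := by
    rw [le_div_iff₀ (by positivity)]
    refine (card_mul_pow_le_of_zigzagWeight_le (k := 128) ?_ (by norm_num) (by norm_num)
      (by norm_num)).trans (pow_le_pow_right₀ (by norm_num) hκ)
    simp only [mem_image, mem_filter, good]
    rintro _ ⟨b, ⟨-, hb⟩, rfl⟩
    exact hb
  have hball : ∀ a, (#{b | 4 * hammingDist b a ≤ n} : ℝ) ≤
      (1 + (3 / 4 : ℝ) ^ 4) ^ n / (3 / 4) ^ n :=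
    fun a => (le_div_iff₀ (by positivity)).2
      (card_filter_mul_hammingDist_le_mul_pow_le a 4 (by norm_num) (by norm_num))
  obtain ⟨b, -, b', -, hsig_eq, hfar⟩ := exists_mem_fiber_not_mem_of_card_mul_lt
    (fun b hb => mem_image_of_mem (signature M Δ) hb) (fun a => {b | 4 * hammingDist b a ≤ n})
    (by positivity) hball <| calc
      _ ≤ (1 - (15 / 16 : ℝ) ^ 128)⁻¹ ^ (2 * n) / (15 / 16) ^ n *
          ((1 + (3 / 4 : ℝ) ^ 4) ^ n / (3 / 4) ^ n) := by gcongr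
      _ < 2 ^ n / 2 := signature_bound_mul_ball_bound_lt hι
      _ ≤ #good := hgood
  refine ⟨b, b', by simp only [mem_filter, mem_univ, true_and, not_le] at hfar; omega, fun k => ?_⟩
  rw [mulVec_sub, Pi.sub_apply]
  exact abs_sub_le_of_round_div_eq hΔ (congrFun hsig_eq k)

theorem exists_ternary_mulVec_le (hM : ∀ k j, |M k j| ≤ 1)
    (hκ : Fintype.card κ ≤ 2 * Fintype.card ι) (hι : 15 ≤ Fintype.card ι) :
    ∃ x : ι → ℝ, (∀ j, x j = 1 ∨ x j = 0 ∨ x j = -1) ∧ Fintype.card ι ≤ 4 * #{j | x j ≠ 0} ∧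
      ∀ k, |(M *ᵥ x) k| ≤ 32 * √(Fintype.card ι) := by
  obtain ⟨b, b', hfar, hclose⟩ := exists_signVec_far_of_mulVec_sub_le hM hκ hι
  refine ⟨(1 / 2 : ℝ) • (signVec b' - signVec b), fun j => ?_, ?_, fun k => ?_⟩
  · simpa [div_eq_inv_mul] using half_signVec_sub_signVec_mem b b' j
  · have hsupp : #{j | ((1 / 2 : ℝ) • (signVec b' - signVec b)) j ≠ 0} = hammingDist b' b :=
      congrArg card <| filter_congr fun j _ => by simp [signVec_sub_signVec_ne_zero_iff]
    rwa [hsupp]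
  · rw [mulVec_smul, Pi.smul_apply, smul_eq_mul, abs_mul]
    linarith [hclose k, abs_nonneg ((M *ᵥ (signVec b' - signVec b)) k)]

end PartialColouring

lemma norm_mulVec_ofReal_le {ι κ : Type*} [Fintype ι] (A : Matrix κ ι ℂ) (x : ι → ℝ) (i : κ) :
    ‖(A *ᵥ fun j => (x j : ℂ)) i‖ ≤
      |(A.map Complex.re *ᵥ x) i| + |(A.map Complex.im *ᵥ x) i| := by
  refine (Complex.norm_le_abs_re_add_abs_im _).trans_eq ?_
  simp [mulVec, dotProduct, Complex.re_sum, Complex.im_sum]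

theorem exists_ternary_norm_mulVec_le {ι κ : Type*} [Fintype ι] [DecidableEq ι] [Fintype κ]
    {A : Matrix κ ι ℂ} (hA : ∀ i j, ‖A i j‖ ≤ 1) (hκ : Fintype.card κ ≤ Fintype.card ι)
    (hι : 15 ≤ Fintype.card ι) :
    ∃ x : ι → ℂ, (∀ j, x j = 1 ∨ x j = 0 ∨ x j = -1) ∧ Fintype.card ι ≤ 4 * #{j | x j ≠ 0} ∧
      ∀ i, ‖(A *ᵥ x) i‖ ≤ 64 * √(Fintype.card ι) := by
  have hM : ∀ k j, |fromRows (A.map Complex.re) (A.map Complex.im) k j| ≤ 1 := by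
    rintro (k | k) j
    · exact (Complex.abs_re_le_norm _).trans (hA k j)
    · exact (Complex.abs_im_le_norm _).trans (hA k j)
  obtain ⟨x, hx, hcard, hle⟩ := exists_ternary_mulVec_le hM (by simp; omega) hι
  refine ⟨fun j => x j, fun j => by rcases hx j with h | h | h <;> simp [h], by simpa using hcard,
    fun i => ?_⟩
  calc ‖(A *ᵥ fun j => (x j : ℂ)) i‖
      ≤ |(A.map Complex.re *ᵥ x) i| + |(A.map Complex.im *ᵥ x) i| := norm_mulVec_ofReal_le A x i
    _ ≤ 32 * √(Fintype.card ι) + 32 * √(Fintype.card ι) := by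
        gcongr
        · simpa [fromRows_mulVec] using hle (Sum.inl i)
        · simpa [fromRows_mulVec] using hle (Sum.inr i)
    _ = 64 * √(Fintype.card ι) := by ring

lemma norm_mulVec_one_le {ι κ : Type*} [Fintype ι] {A : Matrix κ ι ℂ}
    (hA : ∀ i j, ‖A i j‖ ≤ 1) (i : κ) : ‖(A *ᵥ 1) i‖ ≤ Fintype.card ι :=
  calc ‖(A *ᵥ 1) i‖ = ‖∑ j, A i j‖ := by simp [mulVec, dotProduct]
    _ ≤ ∑ j, ‖A i j‖ := norm_sum_le _ _
    _ ≤ ∑ _j : ι, (1 : ℝ) := sum_le_sum fun j _ => hA i j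
    _ = Fintype.card ι := by simp

/-- **Partial colouring lemma.** There is an absolute constant `C > 0` such that for every
`n ≥ 1` and every `n × n` complex matrix `A` with all entries of modulus at most `1`,
there is a vector `x ∈ {-1,0,1}^n` with at least `n/4` non-zero coordinates and
`‖Ax‖_∞ ≤ C √n`. -/
theorem partial_colouring_lemma :
    ∃ C : ℝ, 0 < C ∧
      ∀ n : ℕ, 1 ≤ n → ∀ A : Matrix (Fin n) (Fin n) ℂ,
        (∀ i j, ‖A i j‖ ≤ 1) →
        ∃ x : Fin n → ℂ, (∀ i, x i = 1 ∨ x i = 0 ∨ x i = -1) ∧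
          (n : ℝ) / 4 ≤ (Finset.univ.filter fun i => x i ≠ 0).card ∧
          ∀ i, ‖A.mulVec x i‖ ≤ C * Real.sqrt n := by
  refine ⟨64, by norm_num, fun n _ A hA => ?_⟩
  rcases le_or_gt n 4096 with hsmall | hlarge
  · refine ⟨1, fun _ => Or.inl rfl, by simp; linarith [n.cast_nonneg (α := ℝ)], fun i => ?_⟩
    have hsqrt : √(n : ℝ) ≤ 64 :=
      Real.sqrt_le_iff.2 ⟨by norm_num, by norm_num; exact_mod_cast hsmall⟩
    calc ‖(A *ᵥ 1) i‖ ≤ n := by simpa using norm_mulVec_one_le hA i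
      _ = √n * √n := (Real.mul_self_sqrt n.cast_nonneg).symm
      _ ≤ 64 * √n := by gcongr
  · obtain ⟨x, hx, hcard, hle⟩ := exists_ternary_norm_mulVec_le hA le_rfl (by simp; omega)
    refine ⟨x, hx, ?_, by simpa using hle⟩
    rw [div_le_iff₀ four_pos]
    exact_mod_cast by simpa [mul_comm] using hcard
end

section
/- There exists an absolute constant C > 0 such that for every integer n ≥ 2 there exists a Littlewood polynomial P of degree n (that is, a choice of signs ε₀, …, ε_n ∈ {-1, 1} with P(z) = Σ_{k=0}^n ε_k z^k) satisfying |P(z)| ≤ C √n for every complex number z with |z| = 1. -/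
/-!
The Rudin–Shapiro signs, `ε 0 = 1`, `ε (2k) = ε k`, `ε (2k+1) = (-1)^k ε k`, work with `C = 20`.
Writing `S_N(z) = ∑_{k<N} ε k z^k`, one has `S_{2N}(z) = S_N(z²) + z S_N(-z²)`, so on the unit
circle the parallelogram law gives `|S_{2^m}(z)|² + |S_{2^m}(-z)|² = 2^{m+1}`.
For `N = 2^{m+1} + r` with `r ≤ 2^{m+1}`, the signs after position `2^{m+1}` repeat `ε 0, …, ε (2^m-1)`
and then the negatives of `ε (2^m), …, ε (2^{m+1}-1)`, so the tail of `S_N` is `S_r` or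
`2 S_{2^m} - S_r`. Hence `|S_N| ≤ √(2N') + 2√N' + 10√r ≤ 10√N` with `N' = 2^{m+1}`, by induction on `m`.
-/

open Finset

noncomputable def rudinShapiro (n : ℕ) : ℝ :=
  if n = 0 then 1 else (-1) ^ (n / 2 * (n % 2)) * rudinShapiro (n / 2)
decreasing_by omega

@[simp] lemma rudinShapiro_zero : rudinShapiro 0 = 1 := by
  rw [rudinShapiro, if_pos rfl]

lemma rudinShapiro_two_mul (k : ℕ) : rudinShapiro (2 * k) = rudinShapiro k := by
  rcases Nat.eq_zero_or_pos k with rfl | hk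
  · rfl
  · rw [rudinShapiro, if_neg (by omega), Nat.mul_mod_right, Nat.mul_div_cancel_left k two_pos,
      mul_zero, pow_zero, one_mul]

lemma rudinShapiro_two_mul_add_one (k : ℕ) :
    rudinShapiro (2 * k + 1) = (-1) ^ k * rudinShapiro k := by
  rw [rudinShapiro, if_neg (by omega), show (2 * k + 1) / 2 = k by omega,
    show (2 * k + 1) % 2 = 1 by omega, mul_one]

lemma abs_rudinShapiro (n : ℕ) : |rudinShapiro n| = 1 := by
  induction n using Nat.strong_induction_on with
  | _ n ih =>
    rw [rudinShapiro]
    split_ifs with hn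
    · exact abs_one
    · rw [abs_mul, abs_pow, abs_neg, abs_one, one_pow, one_mul, ih _ (by omega)]

@[simp] lemma rudinShapiro_one : rudinShapiro 1 = 1 := by
  simpa using rudinShapiro_two_mul_add_one 0

/-- `rudinShapiro n` is `(-1)` to the number of blocks `11` in the binary expansion of `n`; the
blocks of `2^m b + i` with `i < 2^m` are those of `b` and those of `2^m (b % 2) + i`. -/
lemma rudinShapiro_two_pow_mul_add {m i : ℕ} (b : ℕ) (hi : i < 2 ^ m) :
    rudinShapiro (2 ^ m * b + i) = rudinShapiro b * rudinShapiro (2 ^ m * (b % 2) + i) := by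
  induction m generalizing i with
  | zero =>
    obtain rfl : i = 0 := by omega
    rcases Nat.even_or_odd' b with ⟨k, rfl | rfl⟩ <;> simp [Nat.add_mod]
  | succ m ih =>
    have hparity : (-1 : ℝ) ^ (2 ^ m * b) = (-1) ^ (2 ^ m * (b % 2)) := by
      rw [neg_one_pow_eq_pow_mod_two, ← Nat.mul_mod_mod, ← neg_one_pow_eq_pow_mod_two]
    rcases Nat.even_or_odd' i with ⟨k, rfl | rfl⟩
    · rw [show 2 ^ (m + 1) * b + 2 * k = 2 * (2 ^ m * b + k) by ring,
        show 2 ^ (m + 1) * (b % 2) + 2 * k = 2 * (2 ^ m * (b % 2) + k) by ring,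
        rudinShapiro_two_mul, rudinShapiro_two_mul, ih (by omega)]
    · rw [show 2 ^ (m + 1) * b + (2 * k + 1) = 2 * (2 ^ m * b + k) + 1 by ring,
        show 2 ^ (m + 1) * (b % 2) + (2 * k + 1) = 2 * (2 ^ m * (b % 2) + k) + 1 by ring,
        rudinShapiro_two_mul_add_one, rudinShapiro_two_mul_add_one, ih (by omega), pow_add,
        pow_add, hparity]
      ring

lemma rudinShapiro_two_pow_succ_add {m j : ℕ} (hj : j < 2 ^ m) :
    rudinShapiro (2 ^ (m + 1) + j) = rudinShapiro j := by
  have h := rudinShapiro_two_pow_mul_add 2 hj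
  have h2 : rudinShapiro 2 = 1 := by simpa using rudinShapiro_two_mul 1
  rw [← pow_succ] at h
  simpa [h2] using h

lemma rudinShapiro_two_pow_succ_add_two_pow_add {m j : ℕ} (hj : j < 2 ^ m) :
    rudinShapiro (2 ^ (m + 1) + (2 ^ m + j)) = -rudinShapiro (2 ^ m + j) := by
  have h := rudinShapiro_two_pow_mul_add 3 hj
  have h3 : rudinShapiro 3 = -1 := by simpa using rudinShapiro_two_mul_add_one 1
  rw [show 2 ^ m * 3 + j = 2 ^ (m + 1) + (2 ^ m + j) by ring] at h
  simpa [h3] using h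

noncomputable def rudinShapiroSum (N : ℕ) (z : ℂ) : ℂ :=
  ∑ k ∈ range N, (rudinShapiro k : ℂ) * z ^ k

lemma rudinShapiroSum_two_mul (N : ℕ) (z : ℂ) :
    rudinShapiroSum (2 * N) z = rudinShapiroSum N (z ^ 2) + z * rudinShapiroSum N (-z ^ 2) := by
  induction N with
  | zero => simp [rudinShapiroSum]
  | succ N ih =>
    simp only [rudinShapiroSum] at ih ⊢
    rw [show 2 * (N + 1) = 2 * N + 1 + 1 by ring, sum_range_succ, sum_range_succ, sum_range_succ,
      sum_range_succ, ih, rudinShapiro_two_mul, rudinShapiro_two_mul_add_one]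
    push_cast
    ring

lemma norm_sq_rudinShapiroSum_two_pow_add {z : ℂ} (hz : ‖z‖ = 1) (m : ℕ) :
    ‖rudinShapiroSum (2 ^ m) z‖ ^ 2 + ‖rudinShapiroSum (2 ^ m) (-z)‖ ^ 2 = 2 ^ (m + 1) := by
  induction m generalizing z with
  | zero => norm_num [rudinShapiroSum]
  | succ m ih =>
    set u := rudinShapiroSum (2 ^ m) (z ^ 2)
    set v := z * rudinShapiroSum (2 ^ m) (-z ^ 2)
    have hv : ‖v‖ = ‖rudinShapiroSum (2 ^ m) (-z ^ 2)‖ := by rw [norm_mul, hz, one_mul]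
    calc ‖rudinShapiroSum (2 ^ (m + 1)) z‖ ^ 2 + ‖rudinShapiroSum (2 ^ (m + 1)) (-z)‖ ^ 2
        = ‖u + v‖ ^ 2 + ‖u - v‖ ^ 2 := by
          rw [pow_succ' 2 m, rudinShapiroSum_two_mul, rudinShapiroSum_two_mul, neg_sq, neg_mul,
            ← sub_eq_add_neg]
      _ = 2 * (‖u‖ ^ 2 + ‖v‖ ^ 2) := parallelogram_law_with_norm ℝ u v
      _ = 2 ^ (m + 1 + 1) := by
          rw [hv, ih (by rw [norm_pow, hz, one_pow]), pow_succ _ (m + 1), mul_comm]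

lemma norm_rudinShapiroSum_two_pow_le {z : ℂ} (hz : ‖z‖ = 1) (m : ℕ) :
    ‖rudinShapiroSum (2 ^ m) z‖ ≤ √(2 ^ (m + 1)) := by
  refine Real.le_sqrt_of_sq_le ?_
  linarith [norm_sq_rudinShapiroSum_two_pow_add hz m, sq_nonneg ‖rudinShapiroSum (2 ^ m) (-z)‖]

lemma norm_rudinShapiroSum_le_card {z : ℂ} (hz : ‖z‖ ≤ 1) (N : ℕ) :
    ‖rudinShapiroSum N z‖ ≤ N := by
  calc ‖rudinShapiroSum N z‖ ≤ ∑ _k ∈ range N, (1 : ℝ) := norm_sum_le_of_le _ fun k _ => ?_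
    _ = N := by simp
  rw [norm_mul, Complex.norm_real, Real.norm_eq_abs, abs_rudinShapiro, one_mul, norm_pow]
  exact pow_le_one₀ (norm_nonneg z) hz

lemma rudinShapiroSum_add (M r : ℕ) (z : ℂ) :
    rudinShapiroSum (M + r) z =
      rudinShapiroSum M z + z ^ M * ∑ j ∈ range r, (rudinShapiro (M + j) : ℂ) * z ^ j := by
  rw [rudinShapiroSum, rudinShapiroSum, sum_range_add, mul_sum]
  congr 1
  exact sum_congr rfl fun j _ => by rw [pow_add]; ring

lemma sum_rudinShapiro_two_pow_succ_add_of_le {m r : ℕ} (hr : r ≤ 2 ^ m) (z : ℂ) :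
    ∑ j ∈ range r, (rudinShapiro (2 ^ (m + 1) + j) : ℂ) * z ^ j = rudinShapiroSum r z :=
  sum_congr rfl fun j hj => by
    rw [rudinShapiro_two_pow_succ_add (by rw [mem_range] at hj; omega)]

lemma sum_rudinShapiro_two_pow_succ_add_two_pow_add {m s : ℕ} (hs : s ≤ 2 ^ m) (z : ℂ) :
    ∑ j ∈ range (2 ^ m + s), (rudinShapiro (2 ^ (m + 1) + j) : ℂ) * z ^ j =
      2 * rudinShapiroSum (2 ^ m) z - rudinShapiroSum (2 ^ m + s) z := by
  have hsecond : ∑ i ∈ range s, (rudinShapiro (2 ^ (m + 1) + (2 ^ m + i)) : ℂ) * z ^ (2 ^ m + i) =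
      -(z ^ 2 ^ m * ∑ i ∈ range s, (rudinShapiro (2 ^ m + i) : ℂ) * z ^ i) := by
    rw [mul_sum, ← sum_neg_distrib]
    refine sum_congr rfl fun i hi => ?_
    rw [rudinShapiro_two_pow_succ_add_two_pow_add (by rw [mem_range] at hi; omega), pow_add]
    push_cast
    ring
  rw [sum_range_add, sum_rudinShapiro_two_pow_succ_add_of_le le_rfl, hsecond,
    rudinShapiroSum_add]
  ring

lemma norm_sum_rudinShapiro_two_pow_succ_add_le {m r : ℕ} (hr : r ≤ 2 ^ (m + 1)) (z : ℂ) :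
    ‖∑ j ∈ range r, (rudinShapiro (2 ^ (m + 1) + j) : ℂ) * z ^ j‖ ≤
      2 * ‖rudinShapiroSum (2 ^ m) z‖ + ‖rudinShapiroSum r z‖ := by
  rcases le_or_gt r (2 ^ m) with hle | hgt
  · rw [sum_rudinShapiro_two_pow_succ_add_of_le hle]
    linarith [norm_nonneg (rudinShapiroSum (2 ^ m) z)]
  · obtain ⟨s, rfl⟩ : ∃ s, r = 2 ^ m + s := ⟨r - 2 ^ m, by omega⟩
    rw [sum_rudinShapiro_two_pow_succ_add_two_pow_add (by rw [pow_succ] at hr; omega)]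
    refine (norm_sub_le _ _).trans_eq ?_
    rw [norm_mul, Complex.norm_two]

lemma sqrt_two_mul_add_le {x r : ℝ} (hr : 0 ≤ r) (hrx : r ≤ x) :
    √(2 * x) + 2 * √x + 10 * √r ≤ 10 * √(x + r) := by
  have hx : 0 ≤ x := hr.trans hrx
  have hsqrt2 : √(2 * x) ≤ 2 * √x := by
    rw [Real.sqrt_le_left (by positivity), mul_pow, Real.sq_sqrt hx]
    linarith
  have hrx' : √r ≤ √x := Real.sqrt_le_sqrt hrx
  have hx2 := Real.sq_sqrt hx
  have hr2 := Real.sq_sqrt hr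
  have hxr2 := Real.sq_sqrt (add_nonneg hx hr)
  have hprod : √x * √r ≤ √x * √x := mul_le_mul_of_nonneg_left hrx' (Real.sqrt_nonneg x)
  nlinarith [Real.sqrt_nonneg x, Real.sqrt_nonneg r, Real.sqrt_nonneg (x + r)]

lemma norm_rudinShapiroSum_le {z : ℂ} (hz : ‖z‖ = 1) (N : ℕ) :
    ‖rudinShapiroSum N z‖ ≤ 10 * √N := by
  suffices h : ∀ m N, N ≤ 2 ^ (m + 1) → ‖rudinShapiroSum N z‖ ≤ 10 * √N from
    h N N (Nat.lt_two_pow_self.le.trans (Nat.pow_le_pow_right two_pos N.le_succ))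
  intro m
  induction m with
  | zero =>
    intro N hN
    have hN' : (N : ℝ) ≤ 2 := by exact_mod_cast hN
    have hsq := Real.sq_sqrt (Nat.cast_nonneg (α := ℝ) N)
    nlinarith [norm_rudinShapiroSum_le_card hz.le N, Real.sqrt_nonneg N]
  | succ m ih =>
    intro N hN
    rcases le_or_gt N (2 ^ (m + 1)) with hle | hgt
    · exact ih N hle
    obtain ⟨r, rfl⟩ : ∃ r, N = 2 ^ (m + 1) + r := ⟨N - 2 ^ (m + 1), by omega⟩
    have hr : r ≤ 2 ^ (m + 1) := by rw [pow_succ _ (m + 1)] at hN; omega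
    have hzM : ‖z ^ 2 ^ (m + 1)‖ = 1 := by rw [norm_pow, hz, one_pow]
    calc ‖rudinShapiroSum (2 ^ (m + 1) + r) z‖
        ≤ ‖rudinShapiroSum (2 ^ (m + 1)) z‖ +
            (2 * ‖rudinShapiroSum (2 ^ m) z‖ + ‖rudinShapiroSum r z‖) := by
          rw [rudinShapiroSum_add]
          refine (norm_add_le _ _).trans ?_
          rw [norm_mul, hzM, one_mul]
          gcongr
          exact norm_sum_rudinShapiro_two_pow_succ_add_le hr z
      _ ≤ √(2 * 2 ^ (m + 1)) + 2 * √(2 ^ (m + 1)) + 10 * √r := by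
          rw [← pow_succ']
          linarith [norm_rudinShapiroSum_two_pow_le hz (m + 1), norm_rudinShapiroSum_two_pow_le hz m,
            ih r hr]
      _ ≤ 10 * √(2 ^ (m + 1) + r) :=
          sqrt_two_mul_add_le (Nat.cast_nonneg r) (by exact_mod_cast hr)
      _ = 10 * √↑(2 ^ (m + 1) + r) := by push_cast; rfl

/-- **Rudin–Shapiro type bound.** There is an absolute constant `C > 0` such that for
every `n ≥ 2` there is a choice of signs `ε₀, …, ε_n ∈ {-1, 1}` such that the Littlewood
polynomial `P(z) = ∑_{k=0}^n ε_k z^k` satisfies `|P(z)| ≤ C √n` for all `z` with `|z| = 1`. -/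
theorem one_sided_flat_littlewood :
    ∃ C : ℝ, 0 < C ∧
      ∀ n : ℕ, 2 ≤ n →
        ∃ ε : ℕ → ℝ, (∀ k, k ≤ n → ε k = 1 ∨ ε k = -1) ∧
          ∀ z : ℂ, ‖z‖ = 1 →
            ‖∑ k ∈ Finset.range (n + 1), (ε k : ℂ) * z ^ k‖ ≤ C * Real.sqrt n := by
  refine ⟨20, by norm_num, fun n hn => ⟨rudinShapiro, fun k _ => ?_, fun z hz => ?_⟩⟩
  · exact (abs_eq zero_le_one).1 (abs_rudinShapiro k)
  · have hsqrt : √((n : ℝ) + 1) ≤ 2 * √n := by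
      rw [Real.sqrt_le_left (by positivity), mul_pow, Real.sq_sqrt (Nat.cast_nonneg n)]
      have : (2 : ℝ) ≤ n := by exact_mod_cast hn
      linarith
    calc ‖rudinShapiroSum (n + 1) z‖ ≤ 10 * √((n : ℝ) + 1) := by
          exact_mod_cast norm_rudinShapiroSum_le hz (n + 1)
      _ ≤ 20 * √n := by linarith
end

section
/- Let a⁽¹⁾, …, a⁽ᵐ⁾ ∈ ℝ^n be vectors with ‖a⁽ʲ⁾‖_∞ ≤ 1 for all j ∈ [m], let x₀ ∈ [-1, 1]^n, and let c₁, …, c_m ≥ 0 be reals satisfying Σ_{j=1}^m exp(-c_j²/16) ≤ 1/16. Then there exists x ∈ [-1, 1]^n such that |⟨x - x₀, a⁽ʲ⁾⟩| ≤ c_j √n for every j ∈ [m], and such that |x_i| = 1 for at least n/4 of the coordinates i ∈ [n]. -/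
open Finset Real

/-- Convexity bound: a mean-zero two-point distribution supported in `[-2,2]` has
MGF at most `exp (2 θ²)`. -/
lemma lm_mgf_step (θ p u v : ℝ) (hp0 : 0 ≤ p) (hp1 : p ≤ 1)
    (hu : |u| ≤ 2) (hv : |v| ≤ 2) (hmean : p * u + (1 - p) * v = 0) :
    p * Real.exp (θ * u) + (1 - p) * Real.exp (θ * v) ≤ Real.exp (2 * θ ^ 2) := by
  have key : ∀ w : ℝ, |w| ≤ 2 → Real.exp (θ * w) ≤
      (2 + w) / 4 * Real.exp (2 * θ) + (2 - w) / 4 * Real.exp (-(2 * θ)) := by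
    intro w hw
    rw [abs_le] at hw
    have h := convexOn_exp.2 (Set.mem_univ (2 * θ)) (Set.mem_univ (-(2 * θ)))
      (by linarith : (0:ℝ) ≤ (2 + w) / 4) (by linarith : (0:ℝ) ≤ (2 - w) / 4)
      (by ring : (2 + w) / 4 + (2 - w) / 4 = 1)
    have e : θ * w = (2 + w) / 4 * (2 * θ) + (2 - w) / 4 * (-(2 * θ)) := by ring
    rw [e]
    simpa [smul_eq_mul] using h
  have h1 := key u hu
  have h2 := key v hv
  have hcosh : Real.cosh (2 * θ) ≤ Real.exp ((2 * θ) ^ 2 / 2) := Real.cosh_le_exp_half_sq _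
  rw [Real.cosh_eq] at hcosh
  have heq : (2 * θ) ^ 2 / 2 = 2 * θ ^ 2 := by ring
  rw [heq] at hcosh
  have hq : p * ((2 + u) / 4) + (1 - p) * ((2 + v) / 4) = 1 / 2 := by
    have : p * u + (1 - p) * v = 0 := hmean
    nlinarith
  have hq2 : p * ((2 - u) / 4) + (1 - p) * ((2 - v) / 4) = 1 / 2 := by
    nlinarith
  nlinarith [mul_le_mul_of_nonneg_left h1 hp0,
    mul_le_mul_of_nonneg_left h2 (by linarith : (0:ℝ) ≤ 1 - p),
    Real.exp_pos (2 * θ), Real.exp_pos (-(2 * θ))]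

/-- **Lovett–Meka partial colouring lemma.** Given vectors `a⁽¹⁾, …, a⁽ᵐ⁾ ∈ ℝ^n` with
`‖a⁽ʲ⁾‖_∞ ≤ 1`, a point `x₀ ∈ [-1,1]^n` and reals `c_j ≥ 0` with
`∑_j exp(-c_j²/16) ≤ 1/16`, there exists `x ∈ [-1,1]^n` with
`|⟨x - x₀, a⁽ʲ⁾⟩| ≤ c_j √n` for all `j`, and `|x_i| = 1` for at least `n/4` coordinates. -/
theorem lovett_meka (n m : ℕ) (a : Fin m → Fin n → ℝ) (x₀ : Fin n → ℝ) (c : Fin m → ℝ)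
    (ha : ∀ j i, |a j i| ≤ 1) (hx₀ : ∀ i, x₀ i ∈ Set.Icc (-1 : ℝ) 1)
    (hc : ∀ j, 0 ≤ c j)
    (hsum : ∑ j, Real.exp (-(c j) ^ 2 / 16) ≤ 1 / 16) :
    ∃ x : Fin n → ℝ, (∀ i, x i ∈ Set.Icc (-1 : ℝ) 1) ∧
      (∀ j, |∑ i, (x i - x₀ i) * a j i| ≤ c j * Real.sqrt n) ∧
      (n : ℝ) / 4 ≤ (Finset.univ.filter fun i => |x i| = 1).card := by
  classical
  obtain rfl | hn := Nat.eq_zero_or_pos n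
  · refine ⟨fun _ => 1, fun i => i.elim0, fun j => ?_, by simp⟩
    simp [Finset.sum_of_isEmpty, mul_nonneg (hc j) (Real.sqrt_nonneg _)]
  -- setup
  have hsn : (0:ℝ) < Real.sqrt n := Real.sqrt_pos.2 (by exact_mod_cast hn)
  set sgn : Bool → ℝ := fun b => if b then 1 else -1 with hsgn
  set q : Fin n → Bool → ℝ := fun i b => if b then (1 + x₀ i) / 2 else (1 - x₀ i) / 2 with hq
  have hq0 : ∀ i b, 0 ≤ q i b := by
    intro i b
    obtain ⟨h1, h2⟩ := hx₀ i
    cases b <;> simp [hq] <;> linarith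
  set w : (Fin n → Bool) → ℝ := fun ε => ∏ i, q i (ε i) with hw
  have hw0 : ∀ ε, 0 ≤ w ε := fun ε => Finset.prod_nonneg fun i _ => hq0 i (ε i)
  have htot : ∑ ε : Fin n → Bool, w ε = 1 := by
    have hps := Fintype.prod_sum (ι := Fin n) (κ := fun _ => Bool) (fun i bb => q i bb)
    rw [hw, ← hps]
    refine Finset.prod_eq_one fun i _ => ?_
    simp [hq]
    ring
  set S : Fin m → (Fin n → Bool) → ℝ := fun j ε => ∑ i, (sgn (ε i) - x₀ i) * a j i with hS
  -- MGF bound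
  have hmgf : ∀ (b : Fin n → ℝ), (∀ i, |b i| ≤ 1) → ∀ θ : ℝ,
      ∑ ε : Fin n → Bool, w ε * Real.exp (θ * ∑ i, (sgn (ε i) - x₀ i) * b i)
        ≤ Real.exp (2 * θ ^ 2 * n) := by
    intro b hb θ
    have step : ∀ ε : Fin n → Bool,
        w ε * Real.exp (θ * ∑ i, (sgn (ε i) - x₀ i) * b i)
          = ∏ i, q i (ε i) * Real.exp (θ * ((sgn (ε i) - x₀ i) * b i)) := by
      intro ε
      rw [hw, Finset.mul_sum, Real.exp_sum, ← Finset.prod_mul_distrib]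
    have hps := Fintype.prod_sum (ι := Fin n) (κ := fun _ => Bool)
      (fun i bb => q i bb * Real.exp (θ * ((sgn bb - x₀ i) * b i)))
    rw [Finset.sum_congr rfl fun ε _ => step ε, ← hps]
    have : Real.exp (2 * θ ^ 2 * n) = ∏ _i : Fin n, Real.exp (2 * θ ^ 2) := by
      rw [Finset.prod_const, ← Real.exp_nat_mul, Finset.card_univ, Fintype.card_fin]
      ring_nf
    rw [this]
    refine Finset.prod_le_prod (fun i _ => ?_) (fun i _ => ?_)
    · refine Finset.sum_nonneg fun bb _ => mul_nonneg (hq0 i bb) (Real.exp_pos _).le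
    · obtain ⟨h1, h2⟩ := hx₀ i
      have hbi := hb i
      rw [abs_le] at hbi
      have : ∑ bb : Bool, q i bb * Real.exp (θ * ((sgn bb - x₀ i) * b i))
          = (1 + x₀ i) / 2 * Real.exp (θ * ((1 - x₀ i) * b i))
            + (1 - (1 + x₀ i) / 2) * Real.exp (θ * ((-1 - x₀ i) * b i)) := by
        simp [hq, hsgn]
        try ring
      rw [this]
      refine lm_mgf_step θ _ _ _ (by linarith) (by linarith) ?_ ?_ (by ring)
      · rw [abs_le]
        constructor <;> nlinarith [abs_le.1 (hb i)]
      · rw [abs_le]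
        constructor <;> nlinarith [abs_le.1 (hb i)]
  -- one-sided tail bound
  have htail : ∀ (b : Fin n → ℝ), (∀ i, |b i| ≤ 1) → ∀ j : Fin m,
      ∑ ε ∈ Finset.univ.filter
        (fun ε : Fin n → Bool => c j * Real.sqrt n < ∑ i, (sgn (ε i) - x₀ i) * b i), w ε
        ≤ Real.exp (-(c j) ^ 2 / 16) := by
    intro b hb j
    set θ : ℝ := c j / (4 * Real.sqrt n) with hθ
    have hθ0 : 0 ≤ θ := div_nonneg (hc j) (by positivity)
    set t : ℝ := c j * Real.sqrt n with ht
    calc ∑ ε ∈ Finset.univ.filter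
            (fun ε : Fin n → Bool => t < ∑ i, (sgn (ε i) - x₀ i) * b i), w ε
        ≤ ∑ ε ∈ Finset.univ.filter
            (fun ε : Fin n → Bool => t < ∑ i, (sgn (ε i) - x₀ i) * b i),
            w ε * Real.exp (θ * ((∑ i, (sgn (ε i) - x₀ i) * b i) - t)) := by
          refine Finset.sum_le_sum fun ε hε => ?_
          rw [Finset.mem_filter] at hε
          have : (1:ℝ) ≤ Real.exp (θ * ((∑ i, (sgn (ε i) - x₀ i) * b i) - t)) := by
            rw [← Real.exp_zero]
            exact Real.exp_le_exp.2 (mul_nonneg hθ0 (by linarith [hε.2]))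
          nlinarith [hw0 ε]
      _ ≤ ∑ ε : Fin n → Bool,
            w ε * Real.exp (θ * ((∑ i, (sgn (ε i) - x₀ i) * b i) - t)) := by
          refine Finset.sum_le_sum_of_subset_of_nonneg (Finset.filter_subset _ _)
            fun ε _ _ => mul_nonneg (hw0 ε) (Real.exp_pos _).le
      _ = Real.exp (-(θ * t)) * ∑ ε : Fin n → Bool,
            w ε * Real.exp (θ * ∑ i, (sgn (ε i) - x₀ i) * b i) := by
          rw [Finset.mul_sum]
          refine Finset.sum_congr rfl fun ε _ => ?_
          rw [mul_sub, Real.exp_sub, Real.exp_neg]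
          ring
      _ ≤ Real.exp (-(θ * t)) * Real.exp (2 * θ ^ 2 * n) :=
          mul_le_mul_of_nonneg_left (hmgf b hb θ) (Real.exp_pos _).le
      _ = Real.exp (-(θ * t) + 2 * θ ^ 2 * n) := (Real.exp_add _ _).symm
      _ ≤ Real.exp (-(c j) ^ 2 / 16) := by
          refine Real.exp_le_exp.2 ?_
          have hsq : Real.sqrt n ^ 2 = (n : ℝ) := Real.sq_sqrt (by positivity)
          have h1 : θ * t = c j ^ 2 / 4 := by
            rw [hθ, ht]
            field_simp
          have h2 : 2 * θ ^ 2 * n = c j ^ 2 / 8 := by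
            rw [hθ]
            field_simp
            nlinarith [hsq]
          rw [h1, h2]
          nlinarith [sq_nonneg (c j)]
  -- union bound
  set Bad : (Fin n → Bool) → Prop := fun ε => ∃ j, c j * Real.sqrt n < |S j ε| with hBad
  have hunion : ∑ ε ∈ Finset.univ.filter Bad, w ε ≤ 1 / 8 := by
    have step1 : ∀ ε ∈ Finset.univ.filter Bad,
        w ε ≤ ∑ j, w ε * (if c j * Real.sqrt n < |S j ε| then (1:ℝ) else 0) := by
      intro ε hε
      rw [Finset.mem_filter] at hε
      obtain ⟨j, hj⟩ := hε.2
      have hle : w ε * (if c j * Real.sqrt n < |S j ε| then (1:ℝ) else 0)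
          ≤ ∑ j', w ε * (if c j' * Real.sqrt n < |S j' ε| then (1:ℝ) else 0) :=
        Finset.single_le_sum
          (f := fun j' => w ε * (if c j' * Real.sqrt n < |S j' ε| then (1:ℝ) else 0))
          (fun j' _ => mul_nonneg (hw0 ε) (by split_ifs <;> norm_num)) (Finset.mem_univ j)
      rw [if_pos hj, mul_one] at hle
      exact hle
    calc ∑ ε ∈ Finset.univ.filter Bad, w ε
        ≤ ∑ ε ∈ Finset.univ.filter Bad,
            ∑ j, w ε * (if c j * Real.sqrt n < |S j ε| then (1:ℝ) else 0) :=
          Finset.sum_le_sum step1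
      _ ≤ ∑ ε : Fin n → Bool,
            ∑ j, w ε * (if c j * Real.sqrt n < |S j ε| then (1:ℝ) else 0) := by
          refine Finset.sum_le_sum_of_subset_of_nonneg (Finset.filter_subset _ _)
            fun ε _ _ => Finset.sum_nonneg fun j _ =>
              mul_nonneg (hw0 ε) (by split_ifs <;> norm_num)
      _ = ∑ j, ∑ ε : Fin n → Bool,
            w ε * (if c j * Real.sqrt n < |S j ε| then (1:ℝ) else 0) :=
          Finset.sum_comm
      _ ≤ ∑ j, 2 * Real.exp (-(c j) ^ 2 / 16) := by
          refine Finset.sum_le_sum fun j _ => ?_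
          have habs : ∀ ε : Fin n → Bool, c j * Real.sqrt n < |S j ε| →
              (c j * Real.sqrt n < S j ε) ∨ (c j * Real.sqrt n < -(S j ε)) := by
            intro ε hε
            rcases abs_cases (S j ε) with ⟨h, _⟩ | ⟨h, _⟩
            · left; linarith
            · right; linarith
          have hsplit : ∑ ε : Fin n → Bool,
              w ε * (if c j * Real.sqrt n < |S j ε| then (1:ℝ) else 0)
              ≤ (∑ ε ∈ Finset.univ.filter
                  (fun ε : Fin n → Bool => c j * Real.sqrt n < ∑ i, (sgn (ε i) - x₀ i) * a j i), w ε)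
                + ∑ ε ∈ Finset.univ.filter
                  (fun ε : Fin n → Bool => c j * Real.sqrt n < ∑ i, (sgn (ε i) - x₀ i) * (-(a j i))), w ε := by
            rw [Finset.sum_filter, Finset.sum_filter, ← Finset.sum_add_distrib]
            refine Finset.sum_le_sum fun ε _ => ?_
            have hSe : -(S j ε) = ∑ i, (sgn (ε i) - x₀ i) * (-(a j i)) := by
              rw [hS, ← Finset.sum_neg_distrib]
              exact Finset.sum_congr rfl fun i _ => by ring
            by_cases h : c j * Real.sqrt n < |S j ε|
            · rw [if_pos h, mul_one]
              rcases habs ε h with h' | h'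
              · rw [if_pos h']
                have : (0:ℝ) ≤ if c j * Real.sqrt n < ∑ i, (sgn (ε i) - x₀ i) * (-(a j i))
                    then w ε else 0 := by split_ifs <;> simp [hw0 ε]
                linarith
              · rw [hSe] at h'
                rw [if_pos h']
                have : (0:ℝ) ≤ if c j * Real.sqrt n < ∑ i, (sgn (ε i) - x₀ i) * a j i
                    then w ε else 0 := by split_ifs <;> simp [hw0 ε]
                linarith
            · rw [if_neg h, mul_zero]
              have h1 : (0:ℝ) ≤ if c j * Real.sqrt n < ∑ i, (sgn (ε i) - x₀ i) * a j i
                  then w ε else 0 := by split_ifs <;> simp [hw0 ε]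
              have h2 : (0:ℝ) ≤ if c j * Real.sqrt n < ∑ i, (sgn (ε i) - x₀ i) * (-(a j i))
                  then w ε else 0 := by split_ifs <;> simp [hw0 ε]
              linarith
          have t1 := htail (a j) (ha j) j
          have t2 := htail (fun i => -(a j i)) (fun i => by rw [abs_neg]; exact ha j i) j
          linarith
      _ = 2 * ∑ j, Real.exp (-(c j) ^ 2 / 16) := by rw [Finset.mul_sum]
      _ ≤ 2 * (1 / 16) := by linarith
      _ = 1 / 8 := by norm_num
  -- extract a good ε
  have hgood : ∃ ε : Fin n → Bool, ¬ Bad ε := by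
    by_contra h
    push_neg at h
    have : Finset.univ.filter Bad = Finset.univ := by
      refine Finset.filter_true_of_mem fun ε _ => h ε
    rw [this, htot] at hunion
    norm_num at hunion
  obtain ⟨ε, hε⟩ := hgood
  simp only [hBad, hS, not_exists, not_lt] at hε
  refine ⟨fun i => sgn (ε i), fun i => ?_, fun j => ?_, ?_⟩
  · rcases h : ε i with _ | _ <;> simp only [hsgn, h] <;> norm_num
  · exact hε j
  · have : (Finset.univ.filter fun i : Fin n => |sgn (ε i)| = 1) = Finset.univ := by
      refine Finset.filter_true_of_mem fun i _ => ?_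
      cases h : ε i <;> simp [hsgn, h]
    rw [this, Finset.card_univ, Fintype.card_fin]
    have : (0:ℝ) ≤ n := by positivity
    linarith
end

section
/- For every ε > 0 there exists k₀ such that for all k ≥ k₀, the Ramsey number satisfies R(3, k) ≤ (1 + ε) k² / log k; equivalently, every graph on at least (1 + ε) k² / log k vertices contains either a triangle or an independent set of size k. -/
/-!
Shearer's argument. Let `f(d) = ∫₀¹ (1 - t) / (1 + (d - 1) t) dt = (d log d - d + 1) / (d - 1)²`;
it is convex and decreasing, `f(d) ~ log d / d`, and `(d + 1) f(d) = 1 + (d - d²) f'(d)`.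
In a triangle-free graph with `n` vertices and average degree `d`, the neighbourhood `N(v)` of
a vertex is independent, so deleting `N[v]` destroys `Σ_{u ∈ N(v)} deg u` edges; summed over
`v` this is `Σ deg² ≥ n d²`. By induction, `v` together with an independent set of `G - N[v]`
of size `≥ #(G - N[v]) f(d_v)` is independent; bounding `f(d_v)` below by the tangent line of
`f` at `d` and averaging over `v`, the differential equation shows that some `v` gives size
`≥ n f(d)`. If all degrees are below `k` and `n ≥ (1 + ε) k² / log k`, this is
`≥ n f(k) ≥ k` for large `k`; otherwise some neighbourhood is already independent of size `k`.
-/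

open Finset Real MeasureTheory intervalIntegral

noncomputable def shearerFun (d : ℝ) : ℝ := ∫ t in (0 : ℝ)..1, (1 - t) / (1 + (d - 1) * t)

/-- The derivative of `shearerFun` at `d`, by differentiation under the integral sign. -/
noncomputable def shearerSlope (d : ℝ) : ℝ :=
  -∫ t in (0 : ℝ)..1, t * (1 - t) / (1 + (d - 1) * t) ^ 2

section

variable {d x t : ℝ}

lemma one_add_sub_one_mul_pos (hd : 0 < d) (ht : t ∈ Set.Icc (0 : ℝ) 1) :
    0 < 1 + (d - 1) * t := by
  nlinarith [mul_nonneg hd.le ht.1, ht.2]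

lemma intervalIntegrable_shearerFun_integrand (hd : 0 < d) :
    IntervalIntegrable (fun t => (1 - t) / (1 + (d - 1) * t)) volume 0 1 := by
  refine ContinuousOn.intervalIntegrable ?_
  rw [Set.uIcc_of_le zero_le_one]
  exact ContinuousOn.div (by fun_prop) (by fun_prop)
    fun t ht => (one_add_sub_one_mul_pos hd ht).ne'

lemma intervalIntegrable_shearerSlope_integrand (hd : 0 < d) :
    IntervalIntegrable (fun t => t * (1 - t) / (1 + (d - 1) * t) ^ 2) volume 0 1 := by
  refine ContinuousOn.intervalIntegrable ?_
  rw [Set.uIcc_of_le zero_le_one]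
  exact ContinuousOn.div (by fun_prop) (by fun_prop)
    fun t ht => pow_ne_zero _ (one_add_sub_one_mul_pos hd ht).ne'

lemma shearerSlope_nonpos (d : ℝ) : shearerSlope d ≤ 0 :=
  neg_nonpos.2 <| integral_nonneg zero_le_one fun t ht =>
    div_nonneg (mul_nonneg ht.1 (by linarith [ht.2])) (sq_nonneg _)

lemma shearerFun_zero : shearerFun 0 = 1 := by
  have h : Set.EqOn (fun t : ℝ => (1 - t) / (1 + (0 - 1) * t)) 1 (Set.Ioo 0 1) := fun t ht =>
    (div_eq_one_iff_eq (by linarith [ht.2])).2 (by ring)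
  rw [shearerFun, integral_of_le zero_le_one, integral_Ioc_eq_integral_Ioo,
    setIntegral_congr_fun measurableSet_Ioo h]
  simp

lemma shearerFun_one : shearerFun 1 = 1 / 2 := by
  simp only [shearerFun, sub_self, zero_mul, add_zero, div_one]
  rw [integral_sub intervalIntegrable_const intervalIntegral.intervalIntegrable_id, integral_id,
    intervalIntegral.integral_const]
  norm_num

lemma shearerFun_eq (hd : 0 < d) (hd1 : d ≠ 1) :
    shearerFun d = (d * log d - d + 1) / (d - 1) ^ 2 := by
  have hd1 : d - 1 ≠ 0 := sub_ne_zero.2 hd1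
  have hderiv : ∀ t ∈ Set.uIcc (0 : ℝ) 1,
      HasDerivAt (fun u => (d / (d - 1) * log (1 + (d - 1) * u) - u) / (d - 1))
        ((1 - t) / (1 + (d - 1) * t)) t := by
    intro t ht
    rw [Set.uIcc_of_le zero_le_one] at ht
    have hpos := one_add_sub_one_mul_pos hd ht
    have hlin : HasDerivAt (fun u : ℝ => 1 + (d - 1) * u) (d - 1) t := by
      simpa using ((hasDerivAt_id t).const_mul (d - 1)).const_add 1
    refine ((((hlin.log hpos.ne').const_mul _).sub (hasDerivAt_id t)).div_const _).congr_deriv ?_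
    field_simp
    ring
  rw [shearerFun,
    integral_eq_sub_of_hasDerivAt hderiv (intervalIntegrable_shearerFun_integrand hd)]
  simp only [mul_zero, mul_one, add_zero, log_one, add_sub_cancel]
  field_simp
  ring

lemma shearerSlope_eq (hd : 0 < d) (hd1 : d ≠ 1) :
    shearerSlope d = (2 * (d - 1) - (d + 1) * log d) / (d - 1) ^ 3 := by
  have hd1 : d - 1 ≠ 0 := sub_ne_zero.2 hd1
  have hderiv : ∀ t ∈ Set.uIcc (0 : ℝ) 1,
      HasDerivAt (fun u => ((d + 1) * log (1 + (d - 1) * u) - (1 + (d - 1) * u)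
          + d / (1 + (d - 1) * u)) / (d - 1) ^ 3)
        (t * (1 - t) / (1 + (d - 1) * t) ^ 2) t := by
    intro t ht
    rw [Set.uIcc_of_le zero_le_one] at ht
    have hpos := one_add_sub_one_mul_pos hd ht
    have hlin : HasDerivAt (fun u : ℝ => 1 + (d - 1) * u) (d - 1) t := by
      simpa using ((hasDerivAt_id t).const_mul (d - 1)).const_add 1
    refine (((((hlin.log hpos.ne').const_mul (d + 1)).sub hlin).add
      ((hasDerivAt_const t d).div hlin hpos.ne')).div_const _).congr_deriv ?_
    field_simp
    ring
  rw [shearerSlope,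
    integral_eq_sub_of_hasDerivAt hderiv (intervalIntegrable_shearerSlope_integrand hd)]
  simp only [mul_zero, mul_one, add_zero, log_one, add_sub_cancel]
  field_simp
  ring

lemma add_one_mul_shearerFun (hd : 0 < d) :
    (d + 1) * shearerFun d = 1 + (d - d ^ 2) * shearerSlope d := by
  rcases eq_or_ne d 1 with rfl | hd1
  · rw [shearerFun_one]; norm_num
  · have : d - 1 ≠ 0 := sub_ne_zero.2 hd1
    rw [shearerFun_eq hd hd1, shearerSlope_eq hd hd1]
    field_simp
    ring

lemma shearerFun_sub_mul_shearerSlope_le_one (hd : 0 < d) :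
    shearerFun d - d * shearerSlope d ≤ 1 := by
  have hle : ∀ t ∈ Set.Icc (0 : ℝ) 1,
      (1 - t) / (1 + (d - 1) * t) + d * (t * (1 - t) / (1 + (d - 1) * t) ^ 2) ≤ 1 := by
    intro t ht
    have hpos : 1 + t * (d - 1) ≠ 0 := by
      rw [mul_comm]; exact (one_add_sub_one_mul_pos hd ht).ne'
    have : (1 - t) / (1 + (d - 1) * t) + d * (t * (1 - t) / (1 + (d - 1) * t) ^ 2)
        = 1 - (d * t) ^ 2 / (1 + (d - 1) * t) ^ 2 := by
      field_simp
      ring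
    rw [this]
    linarith [div_nonneg (sq_nonneg (d * t)) (sq_nonneg (1 + (d - 1) * t))]
  have hf := intervalIntegrable_shearerFun_integrand hd
  have hg := (intervalIntegrable_shearerSlope_integrand hd).const_mul d
  have := integral_mono_on zero_le_one (hf.add hg) intervalIntegrable_const hle
  rw [integral_add hf hg, intervalIntegral.integral_const_mul] at this
  simpa [shearerFun, shearerSlope] using this

lemma shearerFun_add_sub_mul_shearerSlope_le (hd : 0 < d) (hx : 0 ≤ x) :
    shearerFun d + (x - d) * shearerSlope d ≤ shearerFun x := by
  rcases hx.eq_or_lt with rfl | hx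
  · linarith [shearerFun_zero, shearerFun_sub_mul_shearerSlope_le_one hd]
  have hle : ∀ t ∈ Set.Icc (0 : ℝ) 1, 0 ≤ (1 - t) / (1 + (x - 1) * t)
      - (1 - t) / (1 + (d - 1) * t) + (x - d) * (t * (1 - t) / (1 + (d - 1) * t) ^ 2) := by
    intro t ht
    have hd' : 1 + t * (d - 1) ≠ 0 := by
      rw [mul_comm]; exact (one_add_sub_one_mul_pos hd ht).ne'
    have hx' : 1 + t * (x - 1) ≠ 0 := by
      rw [mul_comm]; exact (one_add_sub_one_mul_pos hx ht).ne'
    have : (1 - t) / (1 + (x - 1) * t) - (1 - t) / (1 + (d - 1) * t)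
        + (x - d) * (t * (1 - t) / (1 + (d - 1) * t) ^ 2)
        = (1 - t) * ((d - x) * t) ^ 2 / ((1 + (d - 1) * t) ^ 2 * (1 + (x - 1) * t)) := by
      field_simp
      ring
    rw [this]
    exact div_nonneg (mul_nonneg (by linarith [ht.2]) (sq_nonneg _))
      (mul_nonneg (sq_nonneg _) (one_add_sub_one_mul_pos hx ht).le)
  have hf := intervalIntegrable_shearerFun_integrand hd
  have hg := (intervalIntegrable_shearerSlope_integrand hd).const_mul (x - d)
  have := integral_nonneg (μ := volume) zero_le_one hle
  rw [integral_add ((intervalIntegrable_shearerFun_integrand hx).sub hf) hg,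
    integral_sub (intervalIntegrable_shearerFun_integrand hx) hf,
    intervalIntegral.integral_const_mul] at this
  simp only [shearerFun, shearerSlope] at this ⊢
  linarith

lemma mul_shearerFun_add_sub_mul_shearerSlope_le {m E : ℝ} (hd : 0 < d) (hm : 0 ≤ m)
    (hE : 0 ≤ E) : m * shearerFun d + (E - m * d) * shearerSlope d ≤ m * shearerFun (E / m) := by
  rcases hm.eq_or_lt with rfl | hm
  · simpa using mul_nonpos_of_nonneg_of_nonpos hE (shearerSlope_nonpos d)
  · have := mul_le_mul_of_nonneg_left
      (shearerFun_add_sub_mul_shearerSlope_le hd (div_nonneg hE hm.le)) hm.le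
    rwa [mul_add, ← mul_assoc, mul_sub, mul_div_cancel₀ _ hm.ne'] at this

lemma shearerFun_antitoneOn : AntitoneOn shearerFun (Set.Ici 0) := by
  intro x hx e he hxe
  rcases (Set.mem_Ici.1 he).eq_or_lt with rfl | he
  · rw [le_antisymm hxe hx]
  · nlinarith [shearerFun_add_sub_mul_shearerSlope_le he hx, shearerSlope_nonpos e]

lemma mul_log_div_le_shearerFun {θ : ℝ} (hθ₀ : 0 ≤ θ) (hθ₁ : θ < 1)
    (hd : exp (1 / (1 - θ)) ≤ d) : θ * log d / d ≤ shearerFun d := by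
  have hθ : 0 < 1 - θ := by linarith
  have hd1 : 1 < d := (one_lt_exp_iff.2 (one_div_pos.2 hθ)).trans_le hd
  have hlog : 1 ≤ (1 - θ) * log d :=
    (div_le_iff₀' hθ).1 ((le_log_iff_exp_le (by linarith)).2 hd)
  rw [shearerFun_eq (by linarith) hd1.ne', div_le_div_iff₀ (by linarith) (by nlinarith)]
  nlinarith [mul_le_mul_of_nonneg_left hlog (sq_nonneg d),
    mul_nonneg (mul_nonneg hθ₀ (log_nonneg hd1.le)) (by linarith : (0:ℝ) ≤ d - 1)]

lemma le_mul_shearerFun_of_le {ε k N : ℝ} (hε : 0 < ε) (hk : exp ((1 + ε) / ε) ≤ k)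
    (hN : (1 + ε) * k ^ 2 / log k ≤ N) : k ≤ N * shearerFun k := by
  have hk₀ : 0 < k := (exp_pos _).trans_le hk
  have hlog : 0 < log k := log_pos ((one_lt_exp_iff.2 (by positivity)).trans_le hk)
  have hN₀ : 0 ≤ N := (by positivity : (0 : ℝ) ≤ _).trans hN
  have hθ : 1 / (1 - 1 / (1 + ε)) = (1 + ε) / ε := by
    rw [one_sub_div (by positivity), add_sub_cancel_left, one_div_div]
  calc k = (1 + ε) * k ^ 2 / log k * (1 / (1 + ε) * log k / k) := by field_simp
    _ ≤ N * shearerFun k := by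
      gcongr
      exact mul_log_div_le_shearerFun (by positivity)
        ((div_lt_one (by linarith)).2 (by linarith)) (hθ ▸ hk)

/-- The recursion `α(G) ≥ 1 + α(G - N[v])` averaged over `v`, with `S₁ = Σ_v #(G - N[v])` and
`S₂ = Σ_v (degree sum of G - N[v])`; it holds because `(d + 1) f = 1 + (d - d²) f'`. -/
lemma mul_mul_shearerFun_le {n S₁ S₂ : ℝ} (hd : 0 < d) (hS₁ : S₁ = n ^ 2 - n - n * d)
    (hS₂ : S₂ ≤ n ^ 2 * d - 2 * n * d ^ 2) :
    n * (n * shearerFun d) ≤ n + S₁ * shearerFun d + (S₂ - S₁ * d) * shearerSlope d := by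
  have hslack : S₂ - S₁ * d ≤ n * (d - d ^ 2) := by rw [hS₁]; linarith
  have := mul_le_mul_of_nonpos_right hslack (shearerSlope_nonpos d)
  linear_combination this + n * add_one_mul_shearerFun hd - hS₁ * shearerFun d

end

namespace SimpleGraph

variable {V : Type*} (G : SimpleGraph V) [DecidableRel G.Adj]

def degIn (A : Finset V) (v : V) : ℕ := #{u ∈ A | G.Adj v u}

def degSumIn (A : Finset V) : ℕ := ∑ v ∈ A, G.degIn A v

variable [DecidableEq V] in
def deleteClosedNbhd (A : Finset V) (v : V) : Finset V := A \ insert v {u ∈ A | G.Adj v u}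

variable {G} {A s t : Finset V} {u v : V}

lemma sum_sum_filter_adj_eq_sum_degIn_smul (s t : Finset V) {M : Type*} [AddCommMonoid M]
    (w : V → M) :
    ∑ u ∈ s, ∑ v ∈ t with G.Adj u v, w v = ∑ v ∈ t, G.degIn s v • w v := by
  rw [sum_comm' (t' := t) (s' := fun v => {u ∈ s | G.Adj v u})
    (fun u v => by simp only [mem_filter, G.adj_comm v u]; tauto)]
  simp [degIn]

lemma sum_degIn_comm (s t : Finset V) : ∑ u ∈ s, G.degIn t u = ∑ v ∈ t, G.degIn s v := by
  simpa only [sum_const, smul_eq_mul, mul_one, degIn] using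
    sum_sum_filter_adj_eq_sum_degIn_smul (G := G) s t (fun _ => (1 : ℕ))

lemma isIndepSet_of_degSumIn_eq_zero (hD : G.degSumIn A = 0) : G.IsIndepSet (A : Set V) :=
  fun x hx y hy _ hxy => by
    have : G.degIn A x = 0 := sum_eq_zero_iff.1 hD x hx
    exact notMem_empty y (card_eq_zero.1 this ▸ mem_filter.2 ⟨hy, hxy⟩)

variable [DecidableEq V]

lemma degIn_add_degIn_le (hst : Disjoint s t) (hA : s ∪ t ⊆ A) (v : V) :
    G.degIn s v + G.degIn t v ≤ G.degIn A v := by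
  rw [degIn, degIn, ← card_union_of_disjoint (disjoint_filter_filter hst), ← filter_union]
  exact card_le_card (filter_subset_filter _ hA)

lemma insert_filter_adj_subset (hv : v ∈ A) : insert v {u ∈ A | G.Adj v u} ⊆ A :=
  insert_subset hv (filter_subset _ _)

lemma card_deleteClosedNbhd_add_degIn_add_one (hv : v ∈ A) :
    #(G.deleteClosedNbhd A v) + G.degIn A v + 1 = #A := by
  have hvN : v ∉ ({u ∈ A | G.Adj v u} : Finset V) := by simp
  have := card_le_card (insert_filter_adj_subset (G := G) hv)
  rw [card_insert_of_notMem hvN] at this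
  rw [deleteClosedNbhd, card_sdiff_of_subset (insert_filter_adj_subset hv),
    card_insert_of_notMem hvN, degIn]
  omega

lemma deleteClosedNbhd_ssubset (hv : v ∈ A) : G.deleteClosedNbhd A v ⊂ A :=
  sdiff_ssubset (insert_filter_adj_subset hv) (insert_nonempty _ _)

lemma not_adj_of_mem_deleteClosedNbhd (hu : u ∈ G.deleteClosedNbhd A v) : ¬G.Adj v u := by
  simp_all [deleteClosedNbhd]

lemma ne_of_mem_deleteClosedNbhd (hu : u ∈ G.deleteClosedNbhd A v) : v ≠ u := by
  rintro rfl; simp [deleteClosedNbhd] at hu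

lemma degIn_le_degIn_deleteClosedNbhd_add_one (h3 : G.CliqueFree 3) (huv : G.Adj v u) :
    G.degIn A u ≤ G.degIn (G.deleteClosedNbhd A v) u + 1 := by
  refine (card_le_card fun w hw => ?_).trans (card_insert_le v _)
  rw [mem_filter] at hw
  rw [mem_insert, mem_filter, deleteClosedNbhd, mem_sdiff, mem_insert, mem_filter]
  by_cases hwv : w = v
  · exact .inl hwv
  · refine .inr ⟨⟨hw.1, ?_⟩, hw.2⟩
    rintro (rfl | ⟨-, hvw⟩)
    · exact hwv rfl
    · exact isIndepSet_neighborSet_of_triangleFree G h3 v huv hvw hw.2.ne hw.2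

/-- Deleting `N[v]` destroys every edge at a neighbour of `v`; these are distinct edges as the
neighbourhood of `v` is independent. -/
lemma degSumIn_deleteClosedNbhd_add_le (h3 : G.CliqueFree 3) (hv : v ∈ A) :
    G.degSumIn (G.deleteClosedNbhd A v) + 2 * ∑ u ∈ A with G.Adj v u, G.degIn A u
      ≤ G.degSumIn A := by
  set N : Finset V := {u ∈ A | G.Adj v u}
  set A' := G.deleteClosedNbhd A v
  have hsplit : G.degSumIn A = ∑ x ∈ A', G.degIn A x + (#N + ∑ u ∈ N, G.degIn A u) := by
    rw [degSumIn, ← sum_sdiff (insert_filter_adj_subset (G := G) hv), sum_insert (by simp)]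
    rfl
  have hdisj : Disjoint A' N := disjoint_sdiff_self_left.mono_right (subset_insert _ _)
  have hA' : ∑ x ∈ A', (G.degIn A' x + G.degIn N x) ≤ ∑ x ∈ A', G.degIn A x :=
    sum_le_sum fun x _ => degIn_add_degIn_le hdisj
      (union_subset (sdiff_subset) (filter_subset _ _)) x
  have hN : ∑ u ∈ N, G.degIn A u ≤ ∑ u ∈ N, (G.degIn A' u + 1) :=
    sum_le_sum fun u hu => degIn_le_degIn_deleteClosedNbhd_add_one h3 (mem_filter.1 hu).2
  rw [sum_add_distrib, sum_degIn_comm A' N] at hA'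
  rw [sum_add_distrib, sum_const, smul_eq_mul, mul_one] at hN
  rw [degSumIn]
  omega

lemma sum_degSumIn_deleteClosedNbhd_add_le (h3 : G.CliqueFree 3) (A : Finset V) :
    ∑ v ∈ A, G.degSumIn (G.deleteClosedNbhd A v) + 2 * ∑ u ∈ A, G.degIn A u ^ 2
      ≤ #A * G.degSumIn A := by
  have := sum_le_sum fun v (hv : v ∈ A) => degSumIn_deleteClosedNbhd_add_le h3 hv
  rw [sum_add_distrib, ← mul_sum, sum_sum_filter_adj_eq_sum_degIn_smul, sum_const] at this
  simpa only [smul_eq_mul, sq] using this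

lemma sum_card_deleteClosedNbhd (A : Finset V) :
    ∑ v ∈ A, (#(G.deleteClosedNbhd A v) : ℝ) = #A ^ 2 - #A - G.degSumIn A := by
  have h : ∀ v ∈ A, (#(G.deleteClosedNbhd A v) : ℝ) = #A - 1 - G.degIn A v := fun v hv => by
    rw [← card_deleteClosedNbhd_add_degIn_add_one (G := G) hv]; push_cast; ring
  rw [sum_congr rfl h, sum_sub_distrib, sum_sub_distrib, degSumIn]
  push_cast
  simp only [sum_const, nsmul_eq_mul]
  ring

lemma sum_degSumIn_deleteClosedNbhd_le (h3 : G.CliqueFree 3) (A : Finset V) :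
    ∑ v ∈ A, (G.degSumIn (G.deleteClosedNbhd A v) : ℝ)
      ≤ #A * G.degSumIn A - 2 * ((G.degSumIn A : ℝ) ^ 2 / #A) := by
  have hcount : ∑ v ∈ A, (G.degSumIn (G.deleteClosedNbhd A v) : ℝ)
      + 2 * ∑ u ∈ A, (G.degIn A u : ℝ) ^ 2 ≤ #A * G.degSumIn A := by
    exact_mod_cast sum_degSumIn_deleteClosedNbhd_add_le h3 A
  have hCS : (G.degSumIn A : ℝ) ^ 2 / #A ≤ ∑ u ∈ A, (G.degIn A u : ℝ) ^ 2 := by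
    refine div_le_of_le_mul₀ (by positivity) (by positivity) ?_
    rw [mul_comm]
    exact_mod_cast sq_sum_le_card_mul_sum_sq
  linarith

lemma exists_mem_card_mul_shearerFun_le (h3 : G.CliqueFree 3) (hD : 0 < G.degSumIn A) :
    ∃ v ∈ A, (#A : ℝ) * shearerFun (G.degSumIn A / #A) ≤
      1 + (#(G.deleteClosedNbhd A v) : ℝ) *
        shearerFun (G.degSumIn (G.deleteClosedNbhd A v) / #(G.deleteClosedNbhd A v)) := by
  have hA : A.Nonempty := nonempty_of_sum_ne_zero hD.ne'
  have hn : (0 : ℝ) < #A := by exact_mod_cast hA.card_pos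
  have hd : (0 : ℝ) < G.degSumIn A / #A := div_pos (by exact_mod_cast hD) hn
  have hnd : (G.degSumIn A : ℝ) = #A * (G.degSumIn A / #A) := (mul_div_cancel₀ _ hn.ne').symm
  generalize (G.degSumIn A / #A : ℝ) = d at hd hnd ⊢
  have hsum : ∑ _v ∈ A, (#A : ℝ) * shearerFun d ≤
      ∑ v ∈ A, (1 + (#(G.deleteClosedNbhd A v) : ℝ) * shearerFun d +
        (G.degSumIn (G.deleteClosedNbhd A v) - #(G.deleteClosedNbhd A v) * d) * shearerSlope d) := by
    have hS₁ := sum_card_deleteClosedNbhd (G := G) A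
    have hS₂ := sum_degSumIn_deleteClosedNbhd_le h3 A
    rw [hnd] at hS₁ hS₂
    simp only [sum_const, sum_add_distrib, ← sum_mul, sum_sub_distrib, nsmul_eq_mul, mul_one]
    exact mul_mul_shearerFun_le hd hS₁ (by field_simp at hS₂ ⊢; linarith)
  obtain ⟨v, hv, hle⟩ := exists_le_of_sum_le hA hsum
  refine ⟨v, hv, hle.trans ?_⟩
  rw [add_assoc]
  gcongr
  exact mul_shearerFun_add_sub_mul_shearerSlope_le hd (Nat.cast_nonneg _) (Nat.cast_nonneg _)

theorem exists_isIndepSet_card_mul_shearerFun_le (h3 : G.CliqueFree 3) (A : Finset V) :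
    ∃ s ⊆ A, G.IsIndepSet (s : Set V) ∧ (#A : ℝ) * shearerFun (G.degSumIn A / #A) ≤ #s := by
  induction A using Finset.strongInduction with
  | H A ih =>
  rcases (G.degSumIn A).eq_zero_or_pos with hD | hD
  · exact ⟨A, subset_rfl, isIndepSet_of_degSumIn_eq_zero hD, by simp [hD, shearerFun_zero]⟩
  obtain ⟨v, hv, hle⟩ := exists_mem_card_mul_shearerFun_le h3 hD
  obtain ⟨s, hsA, hs, hcard⟩ := ih _ (deleteClosedNbhd_ssubset (G := G) hv)
  have hvs : v ∉ s := fun h => ne_of_mem_deleteClosedNbhd (G := G) (hsA h) rfl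
  refine ⟨insert v s, insert_subset hv (hsA.trans sdiff_subset), ?_, ?_⟩
  · rw [coe_insert]
    refine hs.insert fun u hu _ => ⟨not_adj_of_mem_deleteClosedNbhd (hsA hu),
      fun h => not_adj_of_mem_deleteClosedNbhd (hsA hu) h.symm⟩
  · rw [card_insert_of_notMem hvs, Nat.cast_succ]
    linarith

theorem exists_isIndepSet_card_mul_shearerFun_le_of_degree_le [Fintype V] (h3 : G.CliqueFree 3)
    {Δ : ℝ} (hΔ : ∀ v, G.degree v ≤ Δ) :
    ∃ s : Finset V, G.IsIndepSet (s : Set V) ∧ (Fintype.card V : ℝ) * shearerFun Δ ≤ #s := by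
  obtain ⟨s, -, hs, hcard⟩ := exists_isIndepSet_card_mul_shearerFun_le h3 univ
  refine ⟨s, hs, ?_⟩
  rcases isEmpty_or_nonempty V with hV | hV
  · simp
  have hn : (0 : ℝ) < Fintype.card V := by exact_mod_cast Fintype.card_pos
  have havg : (G.degSumIn univ : ℝ) / Fintype.card V ≤ Δ := by
    rw [div_le_iff₀ hn, degSumIn, Nat.cast_sum, ← card_univ, mul_comm, ← nsmul_eq_mul,
      ← sum_const]
    refine sum_le_sum fun v _ => ?_
    rw [degIn, ← neighborFinset_eq_filter, card_neighborFinset_eq_degree]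
    exact hΔ v
  calc (Fintype.card V : ℝ) * shearerFun Δ
      ≤ Fintype.card V * shearerFun (G.degSumIn univ / Fintype.card V) := by
        gcongr
        exact shearerFun_antitoneOn (Set.mem_Ici.2 (by positivity))
          (Set.mem_Ici.2 ((by positivity : (0 : ℝ) ≤ _).trans havg)) havg
    _ ≤ #s := by simpa using hcard

end SimpleGraph

open SimpleGraph

/-- **Off-diagonal Ramsey bound.** For every `ε > 0` there is `k₀` such that for all
`k ≥ k₀`, every graph on at least `(1 + ε) k² / log k` vertices contains either a
triangle or an independent set of size `k`; that is, `R(3,k) ≤ (1 + ε) k² / log k`. -/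
theorem ramsey_three_k (ε : ℝ) (hε : 0 < ε) :
    ∃ k₀ : ℕ, ∀ k : ℕ, k₀ ≤ k →
      ∀ (N : ℕ) (G : SimpleGraph (Fin N)),
        (1 + ε) * k ^ 2 / Real.log k ≤ N →
          (¬ G.CliqueFree 3) ∨
            ∃ s : Finset (Fin N), (∀ x ∈ s, ∀ y ∈ s, x ≠ y → ¬ G.Adj x y) ∧ s.card = k := by
  classical
  refine ⟨⌈exp ((1 + ε) / ε)⌉₊, fun k hk N G hN => or_iff_not_imp_left.2 fun h3 => ?_⟩
  rw [not_not] at h3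
  suffices ∃ s : Finset (Fin N), G.IsIndepSet (s : Set (Fin N)) ∧ k ≤ #s by
    obtain ⟨s, hs, hks⟩ := this
    obtain ⟨t, hts, htk⟩ := exists_subset_card_eq hks
    exact ⟨t, fun x hx y hy hxy => hs (hts hx) (hts hy) hxy, htk⟩
  by_cases hdeg : ∃ v, k ≤ G.degree v
  · obtain ⟨v, hv⟩ := hdeg
    exact ⟨G.neighborFinset v, by simpa using isIndepSet_neighborSet_of_triangleFree G h3 v, hv⟩
  simp only [not_exists, not_le] at hdeg
  obtain ⟨s, hs, hcard⟩ := exists_isIndepSet_card_mul_shearerFun_le_of_degree_le h3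
    (Δ := k) fun v => by exact_mod_cast (hdeg v).le
  rw [Fintype.card_fin] at hcard
  refine ⟨s, hs, ?_⟩
  exact_mod_cast (le_mul_shearerFun_of_le hε (Nat.ceil_le.1 hk) hN).trans hcard
end

section
/- Let v ∈ ℝ^n be a vector all of whose coordinates are non-zero, and let X be uniformly distributed on {-1, 1}^n. Then for every b ∈ ℝ, ℙ(⟨X, v⟩ = b) ≤ binomial(n, ⌊n/2⌋) · 2^{-n}; in particular ℙ(⟨X, v⟩ = b) = O(n^{-1/2}). -/
/-!
Record a sign vector `x` by the set `A` of coordinates where `x i * v i > 0`; this determines `x`,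
and `∑ i, x i * v i = ∑_{i ∈ A} |v i| - ∑_{i ∉ A} |v i|` strictly increases when `A` is enlarged.
So the sign vectors with a given value of the sum are recorded by an antichain of subsets of an
`n`-set, and Sperner's theorem bounds their number by `n.choose (n / 2)`. The `O(n^{-1/2})` bound
comes from `n.choose (n / 2) ^ 2 * (n + 1) ≤ 4 ^ n`, proved by induction through the ratio of
consecutive central binomial coefficients.
-/

open Finset

lemma signVectors_finite {ι R : Type*} [Finite ι] [One R] [Neg R] :
    {x : ι → R | ∀ i, x i = 1 ∨ x i = -1}.Finite :=
  Set.Finite.pi' fun _ => Set.toFinite {1, -1}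

section LittlewoodOfford

variable {ι R : Type*} [Fintype ι] [CommRing R] [LinearOrder R] [IsStrictOrderedRing R]

def agreementSet (v x : ι → R) : Finset ι := {i | 0 < x i * v i}

lemma sign_mul_le_sign_mul {s t a : R} (hs : s = 1 ∨ s = -1) (ht : t = 1 ∨ t = -1)
    (h : 0 < s * a → 0 < t * a) : s * a ≤ t * a := by
  rcases hs with rfl | rfl <;> rcases ht with rfl | rfl <;> simp only [one_mul, neg_one_mul] at h ⊢
  all_goals first | exact le_rfl | (by_contra! hlt; linarith [h (by linarith)])

lemma sign_eq_of_pos_iff {s t a : R} (hs : s = 1 ∨ s = -1) (ht : t = 1 ∨ t = -1) (ha : a ≠ 0)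
    (h : 0 < s * a ↔ 0 < t * a) : s = t := by
  rcases hs with rfl | rfl <;> rcases ht with rfl | rfl <;> simp only [one_mul, neg_one_mul] at h ⊢
  all_goals rcases ha.lt_or_gt with ha | ha <;> simp [ha, ha.not_gt] at h

lemma sum_mul_lt_sum_mul_of_agreementSet_ssubset {v x y : ι → R}
    (hx : ∀ i, x i = 1 ∨ x i = -1) (hy : ∀ i, y i = 1 ∨ y i = -1)
    (hxy : agreementSet v x ⊂ agreementSet v y) : ∑ i, x i * v i < ∑ i, y i * v i := by
  obtain ⟨j, hjy, hjx⟩ := Finset.exists_of_ssubset hxy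
  simp only [agreementSet, mem_filter, mem_univ, true_and] at hjx hjy
  refine Finset.sum_lt_sum (fun i _ => sign_mul_le_sign_mul (hx i) (hy i) fun hi => ?_)
    ⟨j, mem_univ j, (not_lt.1 hjx).trans_lt hjy⟩
  simpa [agreementSet] using hxy.subset (by simpa [agreementSet] using hi)

lemma injOn_agreementSet {v : ι → R} (hv : ∀ i, v i ≠ 0) :
    Set.InjOn (agreementSet v) {x | ∀ i, x i = 1 ∨ x i = -1} := fun x hx y hy hxy =>
  funext fun i => sign_eq_of_pos_iff (hx i) (hy i) (hv i) (by
    simpa [agreementSet] using Finset.ext_iff.1 hxy i)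

theorem ncard_signVectors_sum_mul_eq_le {v : ι → R} (hv : ∀ i, v i ≠ 0) (b : R) :
    {x : ι → R | (∀ i, x i = 1 ∨ x i = -1) ∧ ∑ i, x i * v i = b}.ncard ≤
      (Fintype.card ι).choose (Fintype.card ι / 2) := by
  set S := {x : ι → R | (∀ i, x i = 1 ∨ x i = -1) ∧ ∑ i, x i * v i = b}
  have hS : S.Finite := signVectors_finite.subset fun x hx => hx.1
  have hanti : IsAntichain (· ⊆ ·) (agreementSet v '' S) := by
    rintro _ ⟨x, hx, rfl⟩ _ ⟨y, hy, rfl⟩ hne hsub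
    exact (sum_mul_lt_sum_mul_of_agreementSet_ssubset hx.1 hy.1
      (hsub.ssubset_of_ne hne)).ne (hx.2.trans hy.2.symm)
  rw [← ((injOn_agreementSet hv).mono fun x hx => hx.1).ncard_image,
    Set.ncard_eq_toFinset_card _ (hS.image _)]
  exact IsAntichain.sperner (by simpa using hanti)

end LittlewoodOfford

namespace Nat

theorem centralBinom_sq_mul_le (m : ℕ) : m.centralBinom ^ 2 * (2 * m + 1) ≤ 16 ^ m := by
  induction m with
  | zero => simp
  | succ m ih =>
    refine Nat.le_of_mul_le_mul_left ?_ (pow_pos m.succ_pos 2)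
    calc (m + 1) ^ 2 * ((m + 1).centralBinom ^ 2 * (2 * (m + 1) + 1))
        = ((m + 1) * (m + 1).centralBinom) ^ 2 * (2 * m + 3) := by ring
      _ = 4 * ((2 * m + 1) * (2 * m + 3)) * (m.centralBinom ^ 2 * (2 * m + 1)) := by
        rw [succ_mul_centralBinom_succ]; ring
      _ ≤ 4 * (4 * (m + 1) ^ 2) * 16 ^ m := Nat.mul_le_mul (by nlinarith) ih
      _ = (m + 1) ^ 2 * 16 ^ (m + 1) := by ring

theorem choose_half_sq_mul_succ_le (n : ℕ) : n.choose (n / 2) ^ 2 * (n + 1) ≤ 4 ^ n := by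
  obtain ⟨m, rfl | rfl⟩ := n.even_or_odd'
  · rw [mul_div_cancel_left₀ m two_ne_zero, ← centralBinom_eq_two_mul_choose, pow_mul]
    exact centralBinom_sq_mul_le m
  · have hhalf : (2 * m + 1) / 2 = m := by omega
    have hcentral : (m + 1).centralBinom = 2 * (2 * m + 1).choose m := by
      rw [centralBinom_eq_two_mul_choose, show 2 * (m + 1) = 2 * m + 1 + 1 by ring,
        choose_succ_succ, ← choose_symm_half m]
      ring
    refine Nat.le_of_mul_le_mul_left ?_ (by norm_num : 0 < 4)
    calc 4 * ((2 * m + 1).choose ((2 * m + 1) / 2) ^ 2 * (2 * m + 1 + 1))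
        = (m + 1).centralBinom ^ 2 * (2 * m + 2) := by rw [hhalf, hcentral]; ring
      _ ≤ (m + 1).centralBinom ^ 2 * (2 * (m + 1) + 1) := Nat.mul_le_mul_left _ (by omega)
      _ ≤ 16 ^ (m + 1) := centralBinom_sq_mul_le (m + 1)
      _ = 4 * 4 ^ (2 * m + 1) := by rw [show 16 = 4 ^ 2 by rfl, ← pow_mul]; ring

theorem choose_half_mul_sqrt_succ_le (n : ℕ) :
    (n.choose (n / 2) : ℝ) * √(n + 1) ≤ 2 ^ n := by
  refine (pow_le_pow_iff_left₀ (by positivity) (by positivity) two_ne_zero).1 ?_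
  rw [mul_pow, Real.sq_sqrt (by positivity), ← pow_mul, mul_comm n, pow_mul]
  exact_mod_cast choose_half_sq_mul_succ_le n

end Nat

/-- **The Erdős–Littlewood–Offord theorem.** If `v ∈ ℝ^n` has all coordinates non-zero
and `X` is uniform on `{-1,1}^n`, then for every `b ∈ ℝ` we have
`ℙ(⟨X, v⟩ = b) ≤ binomial(n, ⌊n/2⌋) 2^{-n}`; in particular `ℙ(⟨X, v⟩ = b) = O(n^{-1/2})`.
The probability is formulated by counting sign vectors. -/
theorem erdos_littlewood_offord :
    (∀ (n : ℕ) (v : Fin n → ℝ), (∀ i, v i ≠ 0) → ∀ b : ℝ,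
      ({x : Fin n → ℝ | (∀ i, x i = 1 ∨ x i = -1) ∧ ∑ i, x i * v i = b}.ncard : ℝ) /
          2 ^ n ≤
        (n.choose (n / 2) : ℝ) * (2 : ℝ)⁻¹ ^ n) ∧
    ∃ C : ℝ, 0 < C ∧ ∀ (n : ℕ), 1 ≤ n → ∀ (v : Fin n → ℝ), (∀ i, v i ≠ 0) → ∀ b : ℝ,
      ({x : Fin n → ℝ | (∀ i, x i = 1 ∨ x i = -1) ∧ ∑ i, x i * v i = b}.ncard : ℝ) /
          2 ^ n ≤
        C / Real.sqrt n := by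
  refine ⟨fun n v hv b => ?_, 1, one_pos, fun n hn v hv b => ?_⟩
  · rw [inv_pow, ← div_eq_mul_inv]
    gcongr
    simpa using ncard_signVectors_sum_mul_eq_le hv b
  · have hsqrt : 0 < √(n : ℝ) := Real.sqrt_pos.2 (by exact_mod_cast hn)
    calc _ ≤ (n.choose (n / 2) : ℝ) / 2 ^ n := by
          gcongr
          simpa using ncard_signVectors_sum_mul_eq_le hv b
      _ ≤ 1 / √n := by
        rw [div_le_div_iff₀ (by positivity) hsqrt, one_mul]
        calc (n.choose (n / 2) : ℝ) * √n ≤ n.choose (n / 2) * √(n + 1) := by gcongr; linarith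
          _ ≤ 2 ^ n := Nat.choose_half_mul_sqrt_succ_le n
end

section
/- Let d ≥ 1 and let ℋ be a hypergraph on a finite ground set X such that every vertex of X belongs to at most d edges of ℋ. Then there exists a function f : X → {-1, 1} such that |Σ_{x ∈ e} f(x)| ≤ 2d - 1 for every edge e ∈ ℋ. -/
/-- Finishing lemma: once every vertex is coloured `±1` and every edge's sum is
controlled by a small "snapshot" set, the discrepancy bound holds. -/
lemma beck_fiala_done (d : ℕ) (hd : 1 ≤ d) {X : Type*} [Fintype X] [DecidableEq X]
    (H : Finset (Finset X)) (g : X → ℚ)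
    (hpm : ∀ x, g x = 1 ∨ g x = -1)
    (hinv : ∀ e ∈ H, ∃ S : Finset X, S ⊆ e ∧ S.card ≤ d ∧
      ∃ v : X → ℚ, (∀ x ∈ S, |v x| < 1) ∧ ∑ x ∈ e, g x = ∑ x ∈ S, (g x - v x)) :
    ∀ e ∈ H, |∑ x ∈ e, g x| < 2 * d := by
  intro e he
  obtain ⟨S, hSe, hScard, v, hv, hsum⟩ := hinv e he
  rw [hsum]
  rcases S.eq_empty_or_nonempty with hS | hS
  · simp only [hS, Finset.sum_empty, abs_zero]
    have : (1:ℚ) ≤ d := by exact_mod_cast hd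
    linarith
  · calc |∑ x ∈ S, (g x - v x)| ≤ ∑ x ∈ S, |g x - v x| := Finset.abs_sum_le_sum_abs _ _
      _ < ∑ _x ∈ S, 2 := by
          apply Finset.sum_lt_sum_of_nonempty hS
          intro x hx
          have h1 : |g x| = 1 := by rcases hpm x with h | h <;> simp [h]
          calc |g x - v x| ≤ |g x| + |v x| := abs_sub _ _
            _ < 2 := by rw [h1]; linarith [hv x hx]
      _ = 2 * S.card := by rw [Finset.sum_const, nsmul_eq_mul, mul_comm]
      _ ≤ 2 * d := by
          have : (S.card : ℚ) ≤ d := by exact_mod_cast hScard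
          linarith

lemma beck_fiala_key (d : ℕ) (hd : 1 ≤ d) {X : Type*} [Fintype X] [DecidableEq X]
    (H : Finset (Finset X))
    (hdeg : ∀ x : X, (H.filter fun e => x ∈ e).card ≤ d) :
    ∀ n : ℕ, ∀ F : Finset X, F.card ≤ n → ∀ g : X → ℚ,
      (∀ x ∉ F, g x = 1 ∨ g x = -1) →
      (∀ x ∈ F, |g x| < 1) →
      (∀ e ∈ H, d < (e ∩ F).card → ∑ x ∈ e, g x = 0) →
      (∀ e ∈ H, (e ∩ F).card ≤ d → ∃ S : Finset X, S ⊆ e ∧ e ∩ F ⊆ S ∧ S.card ≤ d ∧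
        ∃ v : X → ℚ, (∀ x ∈ S, |v x| < 1) ∧ ∑ x ∈ e, g x = ∑ x ∈ S, (g x - v x)) →
      ∃ f : X → ℚ, (∀ x, f x = 1 ∨ f x = -1) ∧ ∀ e ∈ H, |∑ x ∈ e, f x| < 2 * d := by
  intro n
  induction n with
  | zero =>
    intro F hFcard g hpm hfl hbig hsmall
    have hF : F = ∅ := Finset.card_eq_zero.mp (Nat.le_zero.mp hFcard)
    subst hF
    refine ⟨g, fun x => hpm x (by simp), ?_⟩
    apply beck_fiala_done d hd H g (fun x => hpm x (by simp))
    intro e he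
    obtain ⟨S, hSe, _, hScard, v, hv, hsum⟩ := hsmall e he (by simp)
    exact ⟨S, hSe, hScard, v, hv, hsum⟩
  | succ n ih =>
    intro F hFcard g hpm hfl hbig hsmall
    rcases F.eq_empty_or_nonempty with hF | hFne
    · exact ih F (by simp [hF]) g hpm hfl hbig hsmall
    set big : Finset (Finset X) := H.filter (fun e => d < (e ∩ F).card) with hbigdef
    -- double counting: (d+1) * big.card ≤ d * F.card
    have hcount : (d + 1) * big.card ≤ d * F.card := by
      calc (d + 1) * big.card = ∑ _e ∈ big, (d + 1) := by
            rw [Finset.sum_const, smul_eq_mul, mul_comm]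
        _ ≤ ∑ e ∈ big, (e ∩ F).card :=
            Finset.sum_le_sum (fun e hee => (Finset.mem_filter.1 hee).2)
        _ = ∑ e ∈ big, ∑ x ∈ F, (if x ∈ e then 1 else 0) := by
            refine Finset.sum_congr rfl fun e _ => ?_
            rw [Finset.inter_comm, ← Finset.filter_mem_eq_inter, Finset.card_filter]
        _ = ∑ x ∈ F, ∑ e ∈ big, (if x ∈ e then 1 else 0) := Finset.sum_comm
        _ = ∑ x ∈ F, (big.filter fun e => x ∈ e).card := by
            refine Finset.sum_congr rfl fun x _ => (Finset.card_filter _ _).symm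
        _ ≤ ∑ _x ∈ F, d := by
            refine Finset.sum_le_sum fun x _ => ?_
            refine le_trans (Finset.card_le_card ?_) (hdeg x)
            exact Finset.filter_subset_filter _ (Finset.filter_subset _ H)
        _ = d * F.card := by rw [Finset.sum_const, smul_eq_mul, mul_comm]
    have hbiglt : big.card < F.card := by
      by_contra hle
      push_neg at hle
      have h1 : (d + 1) * big.card ≤ d * big.card :=
        le_trans hcount (Nat.mul_le_mul_left d hle)
      rw [Nat.succ_mul] at h1
      have hb0 : big.card = 0 := by omega
      rw [hb0] at hle
      exact absurd (Finset.card_pos.2 hFne) (by omega)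
    -- the incidence linear map
    set T : (↥F → ℚ) →ₗ[ℚ] (↥big → ℚ) :=
      { toFun := fun c e => ∑ x ∈ F.attach, if (x : X) ∈ (e : Finset X) then c x else 0
        map_add' := by
          intro c c'
          funext e
          simp only [Pi.add_apply]
          rw [← Finset.sum_add_distrib]
          exact Finset.sum_congr rfl fun x _ => by split <;> simp
        map_smul' := by
          intro a c
          funext e
          simp only [Pi.smul_apply, smul_eq_mul, RingHom.id_apply]
          rw [Finset.mul_sum]
          exact Finset.sum_congr rfl fun x _ => by split <;> simp } with hTdef
    have hnotinj : ¬ Function.Injective T := by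
      intro hinj
      have hle := LinearMap.finrank_le_finrank_of_injective hinj
      rw [Module.finrank_pi, Module.finrank_pi] at hle
      simp only [Fintype.card_coe] at hle
      omega
    rw [Function.not_injective_iff] at hnotinj
    obtain ⟨c₁, c₂, hT12, hne⟩ := hnotinj
    set c : ↥F → ℚ := c₁ - c₂ with hc
    have hTc : T c = 0 := by rw [hc, map_sub, hT12, sub_self]
    have hcne : ∃ x : ↥F, c x ≠ 0 := by
      rw [hc]
      by_contra hall
      push_neg at hall
      refine hne (funext fun x => ?_)
      have := hall x
      simpa [sub_eq_zero] using this
    obtain ⟨x₁, hx₁⟩ := hcne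
    set cX : X → ℚ := fun x => if h : x ∈ F then c ⟨x, h⟩ else 0 with hcXdef
    have hcX0 : ∀ x ∉ F, cX x = 0 := fun x hx => dif_neg hx
    have hcXF : ∀ (x : ↥F), cX ↑x = c x := fun x => dif_pos x.2
    have hTsum : ∀ e ∈ big, ∑ x ∈ e, cX x = 0 := by
      intro e hee
      have h1 : ∑ x ∈ e, cX x = ∑ x ∈ e ∩ F, cX x :=
        (Finset.sum_subset Finset.inter_subset_left
          (fun x hx hnx => hcX0 x (fun hF' => hnx (Finset.mem_inter.2 ⟨hx, hF'⟩)))).symm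
      have h2 : ∑ x ∈ e ∩ F, cX x = T c ⟨e, hee⟩ := by
        rw [Finset.inter_comm, ← Finset.filter_mem_eq_inter, Finset.sum_filter]
        rw [← Finset.sum_attach F (fun x => if x ∈ e then cX x else 0)]
        exact Finset.sum_congr rfl fun x _ => by rw [hcXF]
      rw [h1, h2, hTc]
      rfl
    -- choose the step size
    set K := F.filter (fun x => cX x ≠ 0) with hKdef
    have hKne : K.Nonempty := ⟨↑x₁, Finset.mem_filter.2 ⟨x₁.2, by rw [hcXF]; exact hx₁⟩⟩
    set b : X → ℚ := fun x => if 0 < cX x then (1 - g x) / cX x else (-1 - g x) / cX x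
      with hbdef
    obtain ⟨x₀, hx₀K, hx₀min⟩ := K.exists_min_image b hKne
    set t := b x₀ with htdef
    have hx₀F : x₀ ∈ F := (Finset.mem_filter.1 hx₀K).1
    have hx₀c : cX x₀ ≠ 0 := (Finset.mem_filter.1 hx₀K).2
    have hgx₀ := hfl x₀ hx₀F
    rw [abs_lt] at hgx₀
    have hbneg : ∀ x, cX x < 0 → b x = (-1 - g x) / cX x := by
      intro x h
      simp only [hbdef]
      rw [if_neg (by linarith)]
    have hbpos : ∀ x, 0 < cX x → b x = (1 - g x) / cX x := by
      intro x h
      simp only [hbdef]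
      rw [if_pos h]
    have htpos : 0 < t := by
      rw [htdef]
      rcases lt_or_gt_of_ne hx₀c with hneg | hpos
      · rw [hbneg x₀ hneg]
        apply div_pos_of_neg_of_neg <;> linarith
      · rw [hbpos x₀ hpos]
        apply div_pos <;> linarith
    set g' : X → ℚ := fun x => g x + t * cX x with hg'def
    have hmoveF : ∀ x ∉ F, g' x = g x := fun x hx => by
      simp only [hg'def, hcX0 x hx, mul_zero, add_zero]
    have hbound' : ∀ x ∈ F, |g' x| ≤ 1 := by
      intro x hxF
      have hgx := hfl x hxF
      rw [abs_lt] at hgx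
      by_cases hcx : cX x = 0
      · simp only [hg'def, hcx, mul_zero, add_zero]
        rw [abs_le]
        constructor <;> linarith
      · have hxK : x ∈ K := Finset.mem_filter.2 ⟨hxF, hcx⟩
        have hmin := hx₀min x hxK
        rw [abs_le]
        simp only [hg'def]
        rcases lt_or_gt_of_ne hcx with hneg | hpos
        · have hbx : b x = (-1 - g x) / cX x := hbneg x hneg
          have hmul : b x * cX x ≤ t * cX x :=
            mul_le_mul_of_nonpos_right hmin (le_of_lt hneg)
          rw [hbx, div_mul_cancel₀ _ hcx] at hmul
          constructor
          · linarith
          · nlinarith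
        · have hbx : b x = (1 - g x) / cX x := hbpos x hpos
          have hmul : t * cX x ≤ b x * cX x :=
            mul_le_mul_of_nonneg_right hmin (le_of_lt hpos)
          rw [hbx, div_mul_cancel₀ _ hcx] at hmul
          constructor
          · nlinarith
          · linarith
    have hx₀hit : |g' x₀| = 1 := by
      simp only [hg'def]
      rcases lt_or_gt_of_ne hx₀c with hneg | hpos
      · have hteq : t = (-1 - g x₀) / cX x₀ := by rw [htdef, hbneg x₀ hneg]
        rw [hteq, div_mul_cancel₀ _ hx₀c,
          show g x₀ + (-1 - g x₀) = -1 from by ring]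
        norm_num
      · have hteq : t = (1 - g x₀) / cX x₀ := by rw [htdef, hbpos x₀ hpos]
        rw [hteq, div_mul_cancel₀ _ hx₀c,
          show g x₀ + (1 - g x₀) = 1 from by ring]
        norm_num
    have hsumpres : ∀ e ∈ H, d < (e ∩ F).card → ∑ x ∈ e, g' x = ∑ x ∈ e, g x := by
      intro e he hcard
      have hebig : e ∈ big := Finset.mem_filter.2 ⟨he, hcard⟩
      simp only [hg'def]
      rw [Finset.sum_add_distrib, ← Finset.mul_sum, hTsum e hebig, mul_zero, add_zero]
    set F' := F.filter (fun x => |g' x| < 1) with hF'def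
    have hF'sub : F' ⊆ F := Finset.filter_subset _ _
    have hF'card : F'.card < F.card := by
      apply Finset.card_lt_card
      rw [Finset.ssubset_iff_of_subset hF'sub]
      refine ⟨x₀, hx₀F, fun hmem => ?_⟩
      have := (Finset.mem_filter.1 hmem).2
      rw [hx₀hit] at this
      exact lt_irrefl 1 this
    apply ih F' (by omega) g'
    · -- new (i)
      intro x hx
      by_cases hxF : x ∈ F
      · have h1 : ¬ |g' x| < 1 := fun h => hx (Finset.mem_filter.2 ⟨hxF, h⟩)
        have h2 : |g' x| = 1 := le_antisymm (hbound' x hxF) (not_lt.1 h1)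
        exact (abs_eq (by norm_num : (0:ℚ) ≤ 1)).1 h2
      · rw [hmoveF x hxF]
        exact hpm x hxF
    · -- new (ii)
      intro x hx
      exact (Finset.mem_filter.1 hx).2
    · -- new (iii)
      intro e he hcard
      have hFF : (e ∩ F').card ≤ (e ∩ F).card :=
        Finset.card_le_card (Finset.inter_subset_inter subset_rfl hF'sub)
      have hcard' : d < (e ∩ F).card := lt_of_lt_of_le hcard hFF
      rw [hsumpres e he hcard']
      exact hbig e he hcard'
    · -- new (iv)
      intro e he hcard
      by_cases hb2 : d < (e ∩ F).card
      · have hzero : ∑ x ∈ e, g' x = 0 := by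
          rw [hsumpres e he hb2]
          exact hbig e he hb2
        refine ⟨e ∩ F', Finset.inter_subset_left, subset_rfl, hcard, g', ?_, ?_⟩
        · intro x hx
          exact (Finset.mem_filter.1 (Finset.mem_inter.1 hx).2).2
        · rw [hzero]
          simp
      · obtain ⟨S, hSe, heFS, hScard, v, hv, hsum⟩ := hsmall e he (not_lt.1 hb2)
        refine ⟨S, hSe,
          (Finset.inter_subset_inter subset_rfl hF'sub).trans heFS, hScard, v, hv, ?_⟩
        have hkey : ∑ x ∈ e, cX x = ∑ x ∈ S, cX x := by
          have h1 : ∑ x ∈ e, cX x = ∑ x ∈ e ∩ F, cX x :=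
            (Finset.sum_subset Finset.inter_subset_left
              (fun x hx hnx => hcX0 x fun hxF => hnx (Finset.mem_inter.2 ⟨hx, hxF⟩))).symm
          have h2 : ∑ x ∈ S, cX x = ∑ x ∈ e ∩ F, cX x :=
            (Finset.sum_subset heFS
              (fun x hx hnx => hcX0 x fun hxF => hnx (Finset.mem_inter.2 ⟨hSe hx, hxF⟩))).symm
          rw [h1, h2]
        simp only [hg'def]
        rw [Finset.sum_add_distrib, ← Finset.mul_sum, hkey, hsum, Finset.mul_sum,
          ← Finset.sum_add_distrib]
        exact Finset.sum_congr rfl fun x _ => by ring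

/-- **The Beck–Fiala theorem.** Let `d ≥ 1` and let `ℋ` be a hypergraph on a finite
ground set `X` such that every vertex belongs to at most `d` edges. Then there is a
colouring `f : X → {-1,1}` such that `|∑_{x ∈ e} f(x)| ≤ 2d - 1` for every edge
`e ∈ ℋ`. -/
theorem beck_fiala (d : ℕ) (hd : 1 ≤ d) (X : Type*) [Fintype X] [DecidableEq X]
    (H : Finset (Finset X))
    (hdeg : ∀ x : X, (H.filter fun e => x ∈ e).card ≤ d) :
    ∃ f : X → ℤ, (∀ x, f x = 1 ∨ f x = -1) ∧
      ∀ e ∈ H, |∑ x ∈ e, f x| ≤ 2 * (d : ℤ) - 1 := by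
  obtain ⟨fq, hfq, hbound⟩ := beck_fiala_key d hd H hdeg (Fintype.card X) Finset.univ
    (by simp [Finset.card_univ]) (fun _ => 0)
    (by simp)
    (by intro x _; norm_num)
    (by intro e he h; simp)
    (by
      intro e he hcard
      refine ⟨e, subset_rfl, by simp, by simpa using hcard, 0, by norm_num, by simp⟩)
  refine ⟨fun x => if fq x = 1 then 1 else -1,
    fun x => by by_cases h : fq x = 1 <;> simp [h], ?_⟩
  intro e he
  show |∑ x ∈ e, (if fq x = 1 then (1:ℤ) else -1)| ≤ 2 * (d : ℤ) - 1
  have hsum : ((∑ x ∈ e, if fq x = 1 then (1:ℤ) else -1 : ℤ) : ℚ) = ∑ x ∈ e, fq x := by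
    push_cast
    refine Finset.sum_congr rfl fun x _ => ?_
    rcases hfq x with h | h
    · simp [h]
    · norm_num [h]
  have h3 : |((∑ x ∈ e, if fq x = 1 then (1:ℤ) else -1 : ℤ) : ℚ)| < 2 * (d : ℚ) := by
    rw [hsum]; exact hbound e he
  rw [← Int.cast_abs] at h3
  have h4 : |∑ x ∈ e, (if fq x = 1 then (1:ℤ) else -1)| < 2 * (d : ℤ) := by
    exact_mod_cast h3
  omega
end
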